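/- arXiv:1602.02480 — 7 statements merged into one kernel-verified Lean document; each statement's English description precedes it below -/
import Mathlib

section
/- Let 0 < γ < γ' be arbitrary and set α = γ/γ' ∈ (0,1). Let W' be a random variable with the Weibull distribution with shape parameter γ' and let S be a positive strictly stable random variable with exponent α, independent of W'. Then W'·S^{-1/γ'} has the Weibull distribution with shape parameter γ: P(W'·S^{-1/γ'} > x) = exp(-x^γ) for all x ≥ 0. -/
open MeasureTheory ProbabilityTheory Filter Set
open scoped Topology ENNReal

/-! Conditioning on `S` and using independence, the tail of `W'·S^(-1/γ')` at `x` is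
`E[P(W' > x S^(1/γ') | S)] = E[exp (-(x^γ' S))]`, the Laplace transform of `S` at `x^γ'`, which
equals `exp (-(x^γ')^(γ/γ')) = exp (-x^γ)`. The only subtlety is the atom of `S` at `0`, where
`S^(-1/γ') = 0`: it is ruled out because the Laplace transform `exp (-s^α)` tends to `0`. -/

section LaplaceTransform

variable {Ω : Type*} [MeasurableSpace Ω] {P : Measure Ω} {S : Ω → ℝ}

lemma lintegral_ofReal_exp_neg_mul [IsFiniteMeasure P] (hSm : Measurable S)
    (hSnn : ∀ᵐ ω ∂P, 0 ≤ S ω) {s : ℝ} (hs : 0 ≤ s) :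
    ∫⁻ ω, ENNReal.ofReal (Real.exp (-(s * S ω))) ∂P
      = ENNReal.ofReal (∫ ω, Real.exp (-(s * S ω)) ∂P) := by
  have hbound : ∀ᵐ ω ∂P, ‖Real.exp (-(s * S ω))‖ ≤ 1 := by
    filter_upwards [hSnn] with ω hω
    rw [Real.norm_of_nonneg (Real.exp_pos _).le, Real.exp_le_one_iff, neg_nonpos]
    exact mul_nonneg hs hω
  have hint : Integrable (fun ω => Real.exp (-(s * S ω))) P :=
    (integrable_const 1).mono' (by fun_prop) hbound
  exact (ofReal_integral_eq_lintegral_ofReal hint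
    (Eventually.of_forall fun ω => (Real.exp_pos _).le)).symm

lemma measure_eq_zero_le_lintegral_exp_neg_mul (hSm : Measurable S) (s : ℝ) :
    P {ω | S ω = 0} ≤ ∫⁻ ω, ENNReal.ofReal (Real.exp (-(s * S ω))) ∂P :=
  meas_le_lintegral₀ (by fun_prop) fun ω (hω : S ω = 0) => by simp [hω]

lemma ae_ne_zero_of_tendsto_lintegral_exp_neg_mul (hSm : Measurable S)
    (h : Tendsto (fun s : ℝ => ∫⁻ ω, ENNReal.ofReal (Real.exp (-(s * S ω))) ∂P) atTop (𝓝 0)) :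
    ∀ᵐ ω ∂P, S ω ≠ 0 := by
  rw [ae_iff]
  simp only [ne_eq, not_not]
  exact le_zero_iff.1 (ge_of_tendsto' h (measure_eq_zero_le_lintegral_exp_neg_mul hSm))

lemma tendsto_ofReal_exp_neg_rpow_atTop {α : ℝ} (hα : 0 < α) :
    Tendsto (fun s : ℝ => ENNReal.ofReal (Real.exp (-(s ^ α)))) atTop (𝓝 0) := by
  rw [← ENNReal.ofReal_zero]
  exact ENNReal.tendsto_ofReal
    (Real.tendsto_exp_atBot.comp (tendsto_neg_atTop_atBot.comp (tendsto_rpow_atTop hα)))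

lemma ae_pos_of_lintegral_exp_neg_mul_eq_exp_neg_rpow (hSm : Measurable S)
    (hSnn : ∀ᵐ ω ∂P, 0 ≤ S ω) {α : ℝ} (hα : 0 < α)
    (hS : ∀ s : ℝ, 0 ≤ s →
      ∫⁻ ω, ENNReal.ofReal (Real.exp (-(s * S ω))) ∂P = ENNReal.ofReal (Real.exp (-(s ^ α)))) :
    ∀ᵐ ω ∂P, 0 < S ω := by
  have hne := ae_ne_zero_of_tendsto_lintegral_exp_neg_mul hSm
    ((tendsto_ofReal_exp_neg_rpow_atTop hα).congr'
      ((eventually_ge_atTop 0).mono fun s hs => (hS s hs).symm))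
  filter_upwards [hSnn, hne] with ω h0 hne
  exact h0.lt_of_ne' hne

end LaplaceTransform

lemma ProbabilityTheory.IndepFun.measure_mem_eq_lintegral {Ω α β : Type*}
    [MeasurableSpace Ω] [MeasurableSpace α] [MeasurableSpace β] {P : Measure Ω}
    [IsFiniteMeasure P] {X : Ω → α} {Y : Ω → β} (hXY : IndepFun X Y P)
    (hX : Measurable X) (hY : Measurable Y) {A : Set (α × β)} (hA : MeasurableSet A) :
    P {ω | (X ω, Y ω) ∈ A} = ∫⁻ x, P {ω | (x, Y ω) ∈ A} ∂P.map X := by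
  have hmap := (indepFun_iff_map_prod_eq_prod_map_map hX.aemeasurable hY.aemeasurable).1 hXY
  change P ((fun ω => (X ω, Y ω)) ⁻¹' A) = _
  rw [← Measure.map_apply (hX.prodMk hY) hA, hmap, Measure.prod_apply hA]
  exact lintegral_congr fun x => Measure.map_apply hY (measurable_prodMk_left hA)

lemma measure_lt_mul_rpow_neg_inv_of_weibull {Ω : Type*} [MeasurableSpace Ω] {P : Measure Ω}
    {γ : ℝ} (hγ : 0 < γ) {W : Ω → ℝ}
    (hW : ∀ x : ℝ, 0 ≤ x → P {ω | x < W ω} = ENNReal.ofReal (Real.exp (-(x ^ γ))))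
    {x s : ℝ} (hx : 0 ≤ x) (hs : 0 < s) :
    P {ω | x < W ω * s ^ (-(1 / γ))} = ENNReal.ofReal (Real.exp (-(x ^ γ * s))) := by
  have hs' : 0 < s ^ (1 / γ) := Real.rpow_pos_of_pos hs _
  have hset : {ω | x < W ω * s ^ (-(1 / γ))} = {ω | x * s ^ (1 / γ) < W ω} := by
    ext ω
    rw [mem_ofPred_eq, mem_ofPred_eq, Real.rpow_neg hs.le, ← div_eq_mul_inv, lt_div_iff₀ hs']
  rw [hset, hW _ (mul_nonneg hx hs'.le), Real.mul_rpow hx hs'.le, ← Real.rpow_mul hs.le,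
    one_div_mul_cancel hγ.ne', Real.rpow_one]

/-- Let `0 < γ < γ'` and `α = γ/γ' ∈ (0,1)`. If `W'` has the Weibull
distribution with shape parameter `γ'` and `S` is an independent positive strictly
stable random variable with exponent `α`, then `W'·S^(-1/γ')` has the Weibull
distribution with shape parameter `γ`: `P(W'·S^(-1/γ') > x) = exp (-x^γ)` for `x ≥ 0`. -/
theorem weibull_scale_mixture_of_weibull
    {Ω : Type*} [MeasurableSpace Ω] (P : Measure Ω) [IsProbabilityMeasure P]
    (γ γ' : ℝ) (hγ0 : 0 < γ) (hγγ' : γ < γ')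
    (W' S : Ω → ℝ) (hW'm : Measurable W') (hSm : Measurable S)
    (hW' : ∀ x : ℝ, 0 ≤ x → P {ω | x < W' ω} = ENNReal.ofReal (Real.exp (-(x ^ γ'))))
    (hSnn : ∀ᵐ ω ∂P, 0 ≤ S ω)
    (hS : ∀ s : ℝ, 0 ≤ s →
      ∫ ω, Real.exp (-(s * S ω)) ∂P = Real.exp (-(s ^ (γ / γ'))))
    (hindep : IndepFun W' S P) :
    ∀ x : ℝ, 0 ≤ x →
      P {ω | x < W' ω * (S ω) ^ (-(1 / γ'))} = ENNReal.ofReal (Real.exp (-(x ^ γ))) := by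
  have hγ' : 0 < γ' := hγ0.trans hγγ'
  have hLaplace : ∀ s : ℝ, 0 ≤ s → ∫⁻ ω, ENNReal.ofReal (Real.exp (-(s * S ω))) ∂P
      = ENNReal.ofReal (Real.exp (-(s ^ (γ / γ')))) := fun s hs => by
    rw [lintegral_ofReal_exp_neg_mul hSm hSnn hs, hS s hs]
  have hSpos : ∀ᵐ s ∂P.map S, 0 < s := (ae_map_iff hSm.aemeasurable measurableSet_Ioi).2
    (ae_pos_of_lintegral_exp_neg_mul_eq_exp_neg_rpow hSm hSnn (div_pos hγ0 hγ') hLaplace)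
  intro x hx
  have hA : MeasurableSet {p : ℝ × ℝ | x < p.2 * p.1 ^ (-(1 / γ'))} :=
    measurableSet_lt measurable_const (by fun_prop)
  calc P {ω | x < W' ω * S ω ^ (-(1 / γ'))}
      = ∫⁻ s, P {ω | x < W' ω * s ^ (-(1 / γ'))} ∂P.map S :=
        hindep.symm.measure_mem_eq_lintegral hSm hW'm hA
    _ = ∫⁻ s, ENNReal.ofReal (Real.exp (-(x ^ γ' * s))) ∂P.map S :=
        lintegral_congr_ae (hSpos.mono fun s hs =>
          measure_lt_mul_rpow_neg_inv_of_weibull hγ' hW' hx hs)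
    _ = ∫⁻ ω, ENNReal.ofReal (Real.exp (-(x ^ γ' * S ω))) ∂P := lintegral_map (by fun_prop) hSm
    _ = ENNReal.ofReal (Real.exp (-(x ^ γ))) := by
        rw [hLaplace _ (Real.rpow_nonneg hx _), ← Real.rpow_mul hx, mul_div_cancel₀ _ hγ'.ne']
end

section
/- Let α ∈ (0,2] and α' ∈ (0,1]. Let S be a symmetric strictly stable random variable with exponent α and let M be a Mittag-Leffler random variable with parameter α', independent of S. Then S·M^{1/α} has the Linnik distribution with parameter α·α', i.e., E[exp(i·t·S·M^{1/α})] = 1/(1+|t|^{αα'}) for all t ∈ ℝ. -/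
open MeasureTheory ProbabilityTheory Complex

/-!
Conditionally on `M = m`, the variable `S·m^(1/α)` is `S` scaled by `m^(1/α)`, so its
characteristic function at `t` is `exp (-|t|^α · m)`. Averaging over the law of `M` turns this
into the Laplace transform of `M` at `|t|^α`, which is `1/(1 + |t|^(α·α'))`.
-/

theorem ProbabilityTheory.IndepFun.integral_comp_eq_integral_integral
    {Ω α β E : Type*} {mΩ : MeasurableSpace Ω} [MeasurableSpace α] [MeasurableSpace β]
    [NormedAddCommGroup E] [NormedSpace ℝ E] {P : Measure Ω} [IsFiniteMeasure P]
    {X : Ω → α} {Y : Ω → β} (hXY : IndepFun X Y P) (hX : AEMeasurable X P)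
    (hY : AEMeasurable Y P) {f : α × β → E} (hf : Integrable f ((P.map X).prod (P.map Y))) :
    ∫ ω, f (X ω, Y ω) ∂P = ∫ y, ∫ x, f (x, y) ∂(P.map X) ∂(P.map Y) := by
  have hmap := (indepFun_iff_map_prod_eq_prod_map_map hX hY).mp hXY
  rw [← integral_prod_symm f hf, ← hmap,
    integral_map (hX.prodMk hY) (hmap ▸ hf.aestronglyMeasurable)]

theorem integrable_cexp_I_mul_ofReal {α : Type*} [MeasurableSpace α] {μ : Measure α}
    [IsFiniteMeasure μ] {g : α → ℝ} (hg : AEMeasurable g μ) :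
    Integrable (fun a ↦ cexp (I * (g a : ℂ))) μ := by
  refine Integrable.of_bound (by fun_prop) 1 (ae_of_all _ fun a ↦ ?_)
  rw [mul_comm, norm_exp_ofReal_mul_I]

theorem Real.abs_mul_rpow_one_div_rpow {α : ℝ} (hα : α ≠ 0) (t : ℝ) {m : ℝ} (hm : 0 ≤ m) :
    |t * m ^ (1 / α)| ^ α = |t| ^ α * m := by
  rw [abs_mul, abs_of_nonneg (Real.rpow_nonneg hm _),
    Real.mul_rpow (abs_nonneg t) (Real.rpow_nonneg hm _), ← Real.rpow_mul hm,
    one_div, inv_mul_cancel₀ hα, Real.rpow_one]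

theorem integral_cexp_I_mul_mul_rpow_of_stable {μ : Measure ℝ} {α : ℝ} (hα : α ≠ 0)
    (hμ : ∀ t : ℝ, ∫ x, cexp (I * ((t * x : ℝ) : ℂ)) ∂μ = ((Real.exp (-(|t| ^ α)) : ℝ) : ℂ))
    (t : ℝ) {m : ℝ} (hm : 0 ≤ m) :
    ∫ x, cexp (I * ((t * (x * m ^ (1 / α)) : ℝ) : ℂ)) ∂μ
      = ((Real.exp (-(|t| ^ α * m)) : ℝ) : ℂ) := by
  have hcomm : ∀ x : ℝ, t * (x * m ^ (1 / α)) = t * m ^ (1 / α) * x := fun x ↦ by ring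
  simp_rw [hcomm, hμ, Real.abs_mul_rpow_one_div_rpow hα t hm]

theorem stable_times_mittagLeffler_power_is_linnik_general
    {Ω : Type*} [MeasurableSpace Ω] (P : Measure Ω) [IsProbabilityMeasure P]
    (α α' : ℝ) (hα0 : 0 < α)
    (S M : Ω → ℝ) (hSm : Measurable S) (hMm : Measurable M)
    (hS : ∀ t : ℝ,
      ∫ ω, Complex.exp (Complex.I * ((t * S ω : ℝ) : ℂ)) ∂P
        = ((Real.exp (-(|t| ^ α)) : ℝ) : ℂ))
    (hMnn : ∀ᵐ ω ∂P, 0 ≤ M ω)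
    (hM : ∀ s : ℝ, 0 ≤ s →
      ∫ ω, Real.exp (-(s * M ω)) ∂P = (1 + s ^ α')⁻¹)
    (hindep : IndepFun S M P) :
    ∀ t : ℝ,
      ∫ ω, Complex.exp (Complex.I * ((t * (S ω * (M ω) ^ (1 / α)) : ℝ) : ℂ)) ∂P
        = (((1 + |t| ^ (α * α'))⁻¹ : ℝ) : ℂ) := by
  intro t
  have hS_law : ∀ u : ℝ, ∫ x, cexp (I * ((u * x : ℝ) : ℂ)) ∂(P.map S)
      = ((Real.exp (-(|u| ^ α)) : ℝ) : ℂ) := fun u ↦ by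
    rw [integral_map hSm.aemeasurable (by fun_prop), hS]
  have hM_law : ∀ᵐ m ∂(P.map M), 0 ≤ m :=
    (ae_map_iff hMm.aemeasurable measurableSet_Ici).mpr hMnn
  calc ∫ ω, cexp (I * ((t * (S ω * M ω ^ (1 / α)) : ℝ) : ℂ)) ∂P
      = ∫ m, ∫ x, cexp (I * ((t * (x * m ^ (1 / α)) : ℝ) : ℂ)) ∂(P.map S) ∂(P.map M) :=
        hindep.integral_comp_eq_integral_integral hSm.aemeasurable hMm.aemeasurable
          (f := fun p ↦ cexp (I * ((t * (p.1 * p.2 ^ (1 / α)) : ℝ) : ℂ)))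
          (integrable_cexp_I_mul_ofReal (by fun_prop))
    _ = ∫ m, ((Real.exp (-(|t| ^ α * m)) : ℝ) : ℂ) ∂(P.map M) := by
        refine integral_congr_ae ?_
        filter_upwards [hM_law] with m hm
        exact integral_cexp_I_mul_mul_rpow_of_stable hα0.ne' hS_law t hm
    _ = (((1 + |t| ^ (α * α'))⁻¹ : ℝ) : ℂ) := by
        rw [integral_complex_ofReal, integral_map hMm.aemeasurable (by fun_prop),
          hM _ (by positivity), Real.rpow_mul (abs_nonneg t)]

/-- Let `α ∈ (0,2]`, `α' ∈ (0,1]`. If `S` is a symmetric strictly stable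
random variable with exponent `α` (characteristic function `exp (-|t|^α)`) and `M` is an
independent Mittag-Leffler random variable with parameter `α'`, then `S·M^(1/α)` has the
Linnik distribution with parameter `α·α'`:
`E[exp (i·t·S·M^(1/α))] = 1/(1+|t|^(α·α'))` for all `t ∈ ℝ`. -/
theorem stable_times_mittagLeffler_power_is_linnik
    {Ω : Type*} [MeasurableSpace Ω] (P : Measure Ω) [IsProbabilityMeasure P]
    (α α' : ℝ) (hα0 : 0 < α) (hα2 : α ≤ 2) (hα'0 : 0 < α') (hα'1 : α' ≤ 1)
    (S M : Ω → ℝ) (hSm : Measurable S) (hMm : Measurable M)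
    (hS : ∀ t : ℝ,
      ∫ ω, Complex.exp (Complex.I * ((t * S ω : ℝ) : ℂ)) ∂P
        = ((Real.exp (-(|t| ^ α)) : ℝ) : ℂ))
    (hMnn : ∀ᵐ ω ∂P, 0 ≤ M ω)
    (hM : ∀ s : ℝ, 0 ≤ s →
      ∫ ω, Real.exp (-(s * M ω)) ∂P = (1 + s ^ α')⁻¹)
    (hindep : IndepFun S M P) :
    ∀ t : ℝ,
      ∫ ω, Complex.exp (Complex.I * ((t * (S ω * (M ω) ^ (1 / α)) : ℝ) : ℂ)) ∂P
        = (((1 + |t| ^ (α * α'))⁻¹ : ℝ) : ℂ) :=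
  stable_times_mittagLeffler_power_is_linnik_general P α α' hα0 S M hSm hMm hS hMnn hM hindep
end

section
/- Let α ∈ (0,2]. Let X be a standard normal random variable and let M be a Mittag-Leffler random variable with parameter α/2, independent of X. Then X·√(2M) has the Linnik distribution with parameter α, i.e., E[exp(i·t·X·√(2M))] = 1/(1+|t|^α) for all t ∈ ℝ. Thus the Linnik distribution with parameter α is a scale mixture of zero-mean normal laws with mixing distribution the law of twice a Mittag-Leffler random variable with parameter α/2. -/
open MeasureTheory ProbabilityTheory Filter Set
open scoped Topology ENNReal NNReal
open Real Complex

lemma gauss_char (c : ℝ) :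
    ∫ x, Complex.exp (Complex.I * (c * x)) ∂(gaussianReal 0 1) = Complex.exp (-(c^2)/2) := by
  rw [gaussianReal_of_var_ne_zero 0 one_ne_zero]
  have hmeas : Measurable fun x : ℝ => (gaussianPDFReal 0 1 x).toNNReal :=
    (measurable_gaussianPDFReal 0 1).real_toNNReal
  have hpdf : (gaussianPDF 0 1) = fun x => ((gaussianPDFReal 0 1 x).toNNReal : ℝ≥0∞) := by
    ext x; rw [gaussianPDF, ENNReal.ofReal]
  rw [hpdf, integral_withDensity_eq_integral_smul hmeas]
  have h1 : ∀ x : ℝ, ((gaussianPDFReal 0 1 x).toNNReal : ℝ≥0) • Complex.exp (Complex.I * (c * x))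
      = ((Real.sqrt (2*π))⁻¹ : ℂ) * (Complex.exp (Complex.I * c * x) * Complex.exp (-(1/2 : ℂ) * x^2)) := by
    intro x
    rw [NNReal.smul_def, Real.coe_toNNReal _ (gaussianPDFReal_nonneg 0 1 x)]
    rw [gaussianPDFReal]
    simp only [mul_one, sub_zero]
    rw [Complex.real_smul]
    push_cast
    rw [mul_assoc, mul_comm (Complex.exp _) (Complex.exp _), ← Complex.exp_add, ← Complex.exp_add]
    ring_nf
  simp_rw [h1, integral_const_mul]
  rw [fourierIntegral_gaussian (by norm_num : (0:ℝ) < ((1/2 : ℂ)).re) (c : ℂ)]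
  have h2 : ((π : ℂ) / (1/2)) ^ (1/2 : ℂ) = ((Real.sqrt (2*π) : ℝ) : ℂ) := by
    have he : ((π : ℂ) / (1/2)) = ((2*π : ℝ) : ℂ) := by push_cast; ring
    rw [he, Real.sqrt_eq_rpow, Complex.ofReal_cpow (by positivity)]
    norm_num
  rw [h2, ← mul_assoc]
  have h3 : ((Real.sqrt (2*π) : ℝ) : ℂ)⁻¹ * ((Real.sqrt (2*π) : ℝ) : ℂ) = 1 :=
    inv_mul_cancel₀ (Complex.ofReal_ne_zero.mpr (by positivity))
  rw [h3, one_mul]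
  norm_num


/-- Let `α ∈ (0,2]`. If `X` is a standard normal random variable and `M` is an
independent Mittag-Leffler random variable with parameter `α/2`, then `X·√(2M)` has the
Linnik distribution with parameter `α`:
`E[exp (i·t·X·√(2M))] = 1/(1+|t|^α)` for all `t ∈ ℝ`. -/
theorem linnik_is_normal_scale_mixture_with_mittagLeffler_mixing
    {Ω : Type*} [MeasurableSpace Ω] (P : Measure Ω) [IsProbabilityMeasure P]
    (α : ℝ) (hα0 : 0 < α) (hα2 : α ≤ 2)
    (X M : Ω → ℝ) (hXm : Measurable X) (hMm : Measurable M)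
    (hX : Measure.map X P = gaussianReal 0 1)
    (hMnn : ∀ᵐ ω ∂P, 0 ≤ M ω)
    (hM : ∀ s : ℝ, 0 ≤ s →
      ∫ ω, Real.exp (-(s * M ω)) ∂P = (1 + s ^ (α / 2))⁻¹)
    (hindep : IndepFun X M P) :
    ∀ t : ℝ,
      ∫ ω, Complex.exp (Complex.I * ((t * (X ω * Real.sqrt (2 * M ω)) : ℝ) : ℂ)) ∂P
        = (((1 + |t| ^ α)⁻¹ : ℝ) : ℂ) := by
  intro t
  set ν := Measure.map M P with hν
  have hνprob : IsProbabilityMeasure ν := Measure.isProbabilityMeasure_map hMm.aemeasurable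
  set f : ℝ × ℝ → ℂ := fun p => Complex.exp (Complex.I * ((t * (p.1 * Real.sqrt (2 * p.2)) : ℝ) : ℂ))
    with hf_def
  have hfc : Continuous f := by
    apply Complex.continuous_exp.comp
    apply continuous_const.mul
    apply Complex.continuous_ofReal.comp
    fun_prop
  have hpair : Measure.map (fun ω => (X ω, M ω)) P = (Measure.map X P).prod ν :=
    (indepFun_iff_map_prod_eq_prod_map_map hXm.aemeasurable hMm.aemeasurable).1 hindep
  have hpairm : Measurable fun ω => (X ω, M ω) := hXm.prodMk hMm
  have step1 : ∫ ω, Complex.exp (Complex.I * ((t * (X ω * Real.sqrt (2 * M ω)) : ℝ) : ℂ)) ∂P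
      = ∫ p, f p ∂((gaussianReal 0 1).prod ν) := by
    rw [← hX, ← hpair, integral_map hpairm.aemeasurable hfc.aestronglyMeasurable]
  rw [step1]
  have hint : Integrable f ((gaussianReal 0 1).prod ν) := by
    refine (integrable_const (1:ℝ)).mono' hfc.aestronglyMeasurable (ae_of_all _ fun p => ?_)
    simp [hf_def, Complex.norm_exp]
  rw [integral_prod_symm f hint]
  have haem : ∀ᵐ m ∂ν, 0 ≤ m := by
    rw [hν]
    exact (MeasureTheory.ae_map_iff hMm.aemeasurable (measurableSet_le measurable_const measurable_id)).2 hMnn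
  have step2 : ∫ m, (∫ x, f (x, m) ∂(gaussianReal 0 1)) ∂ν
      = ∫ m, ((Real.exp (-(t^2 * m)) : ℝ) : ℂ) ∂ν := by
    refine integral_congr_ae ?_
    filter_upwards [haem] with m hm
    have h1 : ∀ x : ℝ, f (x, m) = Complex.exp (Complex.I * ((t * Real.sqrt (2 * m) : ℝ) * (x:ℝ))) := by
      intro x; simp only [hf_def]; push_cast; ring_nf
    simp_rw [h1]
    rw [gauss_char (t * Real.sqrt (2 * m))]
    have hsq : (t * Real.sqrt (2 * m))^2 = t^2 * (2*m) := by
      rw [mul_pow, Real.sq_sqrt (by linarith)]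
    rw [show (-(((t * Real.sqrt (2*m)):ℝ):ℂ)^2/2) = (((-(t^2*m)):ℝ):ℂ) by
      rw [show -(((t * Real.sqrt (2*m)):ℝ):ℂ)^2/2 = ((-((t * Real.sqrt (2*m))^2/2) : ℝ) : ℂ) by push_cast; ring, hsq]
      push_cast; ring]
    rw [Complex.ofReal_exp]
  have hIR : ∫ m, ((Real.exp (-(t^2 * m)) : ℝ) : ℂ) ∂ν = ((∫ m, Real.exp (-(t^2*m)) ∂ν : ℝ) : ℂ) :=
    integral_ofReal
  rw [step2, hIR]
  have step3 : ∫ m, Real.exp (-(t^2 * m)) ∂ν = (1 + (t^2) ^ (α/2))⁻¹ := by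
    rw [hν, integral_map hMm.aemeasurable ((by continuity : Continuous fun m : ℝ => rexp (-(t^2 * m))).aestronglyMeasurable)]
    exact hM (t^2) (sq_nonneg t)
  rw [step3]
  congr 2
  rw [← _root_.sq_abs, ← Real.rpow_natCast |t| 2, ← Real.rpow_mul (abs_nonneg t)]
  norm_num
  congr 1
  ring
end

section
/- Let α ∈ (0,2]. Let Λ be a standard Laplace random variable and let S, S' be independent positive strictly stable random variables with exponent α/2, each having the same distribution, with Λ, S, S' mutually independent. Then Λ·√(S/S') has the Linnik distribution with parameter α, i.e., E[exp(i·t·Λ·√(S/S'))] = 1/(1+|t|^α) for all t ∈ ℝ. -/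
open MeasureTheory ProbabilityTheory Filter Set
open scoped Topology ENNReal

/-!
Conditioning on `(S, S')`, the characteristic function of `Λ` turns the left-hand side into
`E[(1 + t² S/S')⁻¹]`, so it suffices to show `E[(1 + l A/B)⁻¹] = (1 + l^δ)⁻¹` for independent
`A, B ≥ 0` with Laplace transform `exp(-s^δ)`. Write `(1 + l a/b)⁻¹ = ∫₀^∞ b e^{-xb} e^{-lxa} dx`.
Averaging over `A` produces the factor `exp(-(lx)^δ)`. Averaging over `B` produces
`x ↦ E[B e^{-xB}]`, whose tail integrals are `E[e^{-aB}] = exp(-a^δ)`; hence it is the Weibull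
density `δ x^{δ-1} exp(-x^δ)` (the law of `E/B` for a standard exponential `E`). Integrating
`exp(-l^δ x^δ)` against that density gives `(1 + l^δ)⁻¹`.
-/

theorem lintegral_Ioi_rpow_mul_exp_neg_mul_rpow {δ c a : ℝ} (hδ : 0 < δ) (hc : 0 < c)
    (ha : 0 ≤ a) :
    ∫⁻ u in Ioi a, ENNReal.ofReal (δ * c * u ^ (δ - 1) * Real.exp (-(c * u ^ δ)))
      = ENNReal.ofReal (Real.exp (-(c * a ^ δ))) := by
  set G : ℝ → ℝ := fun u => -Real.exp (-(c * u ^ δ)) with hG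
  have hcont : ContinuousWithinAt G (Ici a) a :=
    ((Real.continuous_rpow_const hδ.le).continuousWithinAt.const_mul c).neg.rexp.neg
  have hderiv : ∀ x ∈ Ioi a,
      HasDerivAt G (δ * c * x ^ (δ - 1) * Real.exp (-(c * x ^ δ))) x := by
    intro x hx
    have hpow := Real.hasDerivAt_rpow_const (p := δ) (Or.inl (ha.trans_lt hx).ne')
    exact ((hpow.const_mul c).fun_neg.exp.fun_neg).congr_deriv (by ring)
  have hnonneg : ∀ x ∈ Ioi a, 0 ≤ δ * c * x ^ (δ - 1) * Real.exp (-(c * x ^ δ)) := by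
    intro x hx
    have : 0 ≤ x := ha.trans hx.le
    positivity
  have hlim : Tendsto G atTop (𝓝 0) := by
    have := Real.tendsto_exp_atBot.comp
      (tendsto_neg_atTop_atBot.comp ((tendsto_rpow_atTop hδ).const_mul_atTop hc))
    simpa [hG] using this.neg
  rw [← ofReal_integral_eq_lintegral_ofReal
      (integrableOn_Ioi_deriv_of_nonneg hcont hderiv hnonneg hlim)
      ((ae_restrict_iff' measurableSet_Ioi).mpr (ae_of_all _ hnonneg)),
    integral_Ioi_of_hasDerivAt_of_nonneg hcont hderiv hnonneg hlim]
  simp [hG]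

theorem lintegral_Ioi_mul_exp_neg_mul {b a : ℝ} (hb : 0 < b) (ha : 0 ≤ a) :
    ∫⁻ x in Ioi a, ENNReal.ofReal (b * Real.exp (-(x * b)))
      = ENNReal.ofReal (Real.exp (-(a * b))) := by
  simpa [mul_comm] using lintegral_Ioi_rpow_mul_exp_neg_mul_rpow one_pos hb ha

noncomputable def weibullDensity (δ x : ℝ) : ℝ := δ * x ^ (δ - 1) * Real.exp (-(x ^ δ))

theorem ae_restrict_Ioi_eq_of_setLIntegral_Ioi_eq {f g : ℝ → ℝ≥0∞} (hf : AEMeasurable f)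
    (hg : AEMeasurable g) (hfin : ∫⁻ x in Ioi 0, f x ≠ ∞)
    (h : ∀ a, 0 ≤ a → ∫⁻ x in Ioi a, f x = ∫⁻ x in Ioi a, g x) :
    f =ᵐ[volume.restrict (Ioi 0)] g := by
  have hrestrict : ∀ (φ : ℝ → ℝ≥0∞) (a : ℝ),
      (volume.restrict (Ioi 0)).withDensity φ (Ici a) = ∫⁻ x in Ioi (a ⊔ 0), φ x := by
    intro φ a
    rw [withDensity_apply _ measurableSet_Ici, Measure.restrict_restrict measurableSet_Ici,
      ← Ioi_inter_Ioi]
    exact setLIntegral_congr (Ioi_ae_eq_Ici.symm.inter (ae_eq_refl _))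
  have : IsFiniteMeasure ((volume.restrict (Ioi 0)).withDensity f) :=
    isFiniteMeasure_withDensity hfin
  rw [← withDensity_eq_iff hf.restrict hg.restrict hfin]
  exact Measure.ext_of_Ici _ _ fun a => by rw [hrestrict, hrestrict, h _ le_sup_right]

section LaplaceTransform

variable {Ω : Type*} [MeasurableSpace Ω] {P : Measure Ω} [IsFiniteMeasure P] {B : Ω → ℝ}
  {δ : ℝ}

theorem lintegral_ofReal_exp_neg_mul_of_integral_eq (hBm : Measurable B)
    (hBnn : ∀ᵐ ω ∂P, 0 ≤ B ω)
    (hB : ∀ s : ℝ, 0 ≤ s → ∫ ω, Real.exp (-(s * B ω)) ∂P = Real.exp (-(s ^ δ)))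
    {s : ℝ} (hs : 0 ≤ s) :
    ∫⁻ ω, ENNReal.ofReal (Real.exp (-(s * B ω))) ∂P = ENNReal.ofReal (Real.exp (-(s ^ δ))) := by
  have hint : Integrable (fun ω => Real.exp (-(s * B ω))) P := by
    refine (integrable_const (1 : ℝ)).mono' (by fun_prop) ?_
    filter_upwards [hBnn] with ω hω
    rw [Real.norm_of_nonneg (Real.exp_nonneg _), Real.exp_le_one_iff, neg_nonpos]
    exact mul_nonneg hs hω
  rw [← ofReal_integral_eq_lintegral_ofReal hint (ae_of_all _ fun _ => Real.exp_nonneg _),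
    hB s hs]

theorem ae_pos_of_integral_exp_neg_mul_eq (hBm : Measurable B) (hBnn : ∀ᵐ ω ∂P, 0 ≤ B ω)
    (hδ : 0 < δ)
    (hB : ∀ s : ℝ, 0 ≤ s → ∫ ω, Real.exp (-(s * B ω)) ∂P = Real.exp (-(s ^ δ))) :
    ∀ᵐ ω ∂P, 0 < B ω := by
  have hbound : ∀ n : ℕ, P {ω | B ω ≤ 0} ≤ ENNReal.ofReal (Real.exp (-((n : ℝ) ^ δ))) := by
    intro n
    calc P {ω | B ω ≤ 0}
        ≤ P {ω | 1 ≤ ENNReal.ofReal (Real.exp (-(n * B ω)))} := by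
          refine measure_mono fun ω (hω : B ω ≤ 0) => ?_
          rw [mem_ofPred_eq, ENNReal.one_le_ofReal, Real.one_le_exp_iff, neg_nonneg]
          exact mul_nonpos_of_nonneg_of_nonpos n.cast_nonneg hω
      _ ≤ ∫⁻ ω, ENNReal.ofReal (Real.exp (-(n * B ω))) ∂P := by
          simpa using mul_meas_ge_le_lintegral₀ (μ := P)
            (f := fun ω => ENNReal.ofReal (Real.exp (-(n * B ω)))) (by fun_prop) 1
      _ = ENNReal.ofReal (Real.exp (-((n : ℝ) ^ δ))) :=
          lintegral_ofReal_exp_neg_mul_of_integral_eq hBm hBnn hB n.cast_nonneg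
  have hlim : Tendsto (fun n : ℕ => ENNReal.ofReal (Real.exp (-((n : ℝ) ^ δ)))) atTop (𝓝 0) := by
    simpa using ENNReal.tendsto_ofReal (Real.tendsto_exp_atBot.comp
      (tendsto_neg_atTop_atBot.comp ((tendsto_rpow_atTop hδ).comp tendsto_natCast_atTop_atTop)))
  have hnull : P {ω | B ω ≤ 0} = 0 := le_antisymm (ge_of_tendsto' hlim hbound) zero_le
  filter_upwards [measure_eq_zero_iff_ae_notMem.mp hnull] with ω hω using lt_of_not_ge hω

theorem setLIntegral_Ioi_lintegral_mul_exp_neg_mul (hBm : Measurable B)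
    (hBnn : ∀ᵐ ω ∂P, 0 ≤ B ω) (hδ : 0 < δ)
    (hB : ∀ s : ℝ, 0 ≤ s → ∫ ω, Real.exp (-(s * B ω)) ∂P = Real.exp (-(s ^ δ)))
    {a : ℝ} (ha : 0 ≤ a) :
    ∫⁻ x in Ioi a, ∫⁻ ω, ENNReal.ofReal (B ω * Real.exp (-(x * B ω))) ∂P
      = ENNReal.ofReal (Real.exp (-(a ^ δ))) := by
  rw [lintegral_lintegral_swap (by fun_prop),
    ← lintegral_ofReal_exp_neg_mul_of_integral_eq hBm hBnn hB ha]
  refine lintegral_congr_ae ?_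
  filter_upwards [ae_pos_of_integral_exp_neg_mul_eq hBm hBnn hδ hB] with ω hω
  exact lintegral_Ioi_mul_exp_neg_mul hω ha

theorem lintegral_mul_exp_neg_mul_ae_eq_weibullDensity (hBm : Measurable B)
    (hBnn : ∀ᵐ ω ∂P, 0 ≤ B ω) (hδ : 0 < δ)
    (hB : ∀ s : ℝ, 0 ≤ s → ∫ ω, Real.exp (-(s * B ω)) ∂P = Real.exp (-(s ^ δ))) :
    (fun x => ∫⁻ ω, ENNReal.ofReal (B ω * Real.exp (-(x * B ω))) ∂P)
      =ᵐ[volume.restrict (Ioi 0)] fun x => ENNReal.ofReal (weibullDensity δ x) := by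
  have hweibull : ∀ a, 0 ≤ a →
      ∫⁻ x in Ioi a, ENNReal.ofReal (weibullDensity δ x)
        = ENNReal.ofReal (Real.exp (-(a ^ δ))) := by
    intro a ha
    simpa [weibullDensity] using lintegral_Ioi_rpow_mul_exp_neg_mul_rpow hδ one_pos ha
  refine ae_restrict_Ioi_eq_of_setLIntegral_Ioi_eq
    (Measurable.lintegral_prod_right'
      (f := fun p : ℝ × Ω => ENNReal.ofReal (B p.2 * Real.exp (-(p.1 * B p.2))))
      (by fun_prop)).aemeasurable
    (by unfold weibullDensity; fun_prop) ?_ fun a ha => ?_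
  · rw [setLIntegral_Ioi_lintegral_mul_exp_neg_mul hBm hBnn hδ hB le_rfl]
    exact ENNReal.ofReal_ne_top
  · rw [setLIntegral_Ioi_lintegral_mul_exp_neg_mul hBm hBnn hδ hB ha, hweibull a ha]

end LaplaceTransform

theorem ofReal_inv_one_add_mul_div_eq_lintegral {a b l : ℝ} (ha : 0 ≤ a) (hb : 0 < b)
    (hl : 0 ≤ l) :
    ENNReal.ofReal ((1 + l * (a / b))⁻¹)
      = ∫⁻ x in Ioi 0, ENNReal.ofReal (b * Real.exp (-(x * b)))
          * ENNReal.ofReal (Real.exp (-(l * x * a))) := by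
  have hr : 0 < b + l * a := by positivity
  have hprod : ∀ x : ℝ, ENNReal.ofReal (b * Real.exp (-(x * b)))
      * ENNReal.ofReal (Real.exp (-(l * x * a)))
      = ENNReal.ofReal (b / (b + l * a))
        * ENNReal.ofReal ((b + l * a) * Real.exp (-(x * (b + l * a)))) := by
    intro x
    rw [← ENNReal.ofReal_mul (by positivity), ← ENNReal.ofReal_mul (by positivity)]
    congr 1
    rw [show -(x * (b + l * a)) = -(x * b) + -(l * x * a) by ring, Real.exp_add]
    field_simp
  simp_rw [hprod]
  rw [lintegral_const_mul _ (by fun_prop), lintegral_Ioi_mul_exp_neg_mul hr le_rfl]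
  field_simp
  simp

theorem lintegral_Ioi_weibullDensity_mul_exp_neg_rpow {δ l : ℝ} (hδ : 0 < δ) (hl : 0 ≤ l) :
    ∫⁻ x in Ioi 0, ENNReal.ofReal (weibullDensity δ x)
        * ENNReal.ofReal (Real.exp (-((l * x) ^ δ))) = ENNReal.ofReal ((1 + l ^ δ)⁻¹) := by
  have hc : 0 < 1 + l ^ δ := by positivity
  rw [setLIntegral_congr_fun measurableSet_Ioi (g := fun x => ENNReal.ofReal ((1 + l ^ δ)⁻¹)
      * ENNReal.ofReal (δ * (1 + l ^ δ) * x ^ (δ - 1) * Real.exp (-((1 + l ^ δ) * x ^ δ))))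
      fun x (hx : 0 < x) => ?_,
    lintegral_const_mul _ (by fun_prop), lintegral_Ioi_rpow_mul_exp_neg_mul_rpow hδ hc le_rfl,
    Real.zero_rpow hδ.ne']
  · simp
  · dsimp only
    rw [← ENNReal.ofReal_mul (by unfold weibullDensity; positivity),
      ← ENNReal.ofReal_mul (by positivity), Real.mul_rpow hl hx.le, weibullDensity]
    congr 1
    rw [add_mul, neg_add, Real.exp_add]
    field_simp

section Ratio

variable {Ω : Type*} [MeasurableSpace Ω] {P : Measure Ω} [IsFiniteMeasure P] {A B : Ω → ℝ}
  {δ l : ℝ}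

theorem lintegral_ofReal_inv_one_add_mul_div (hAm : Measurable A) (hBm : Measurable B)
    (hindep : IndepFun B A P) (hAnn : ∀ᵐ ω ∂P, 0 ≤ A ω) (hBnn : ∀ᵐ ω ∂P, 0 ≤ B ω) (hδ : 0 < δ)
    (hA : ∀ s : ℝ, 0 ≤ s → ∫ ω, Real.exp (-(s * A ω)) ∂P = Real.exp (-(s ^ δ)))
    (hB : ∀ s : ℝ, 0 ≤ s → ∫ ω, Real.exp (-(s * B ω)) ∂P = Real.exp (-(s ^ δ)))
    (hl : 0 ≤ l) :
    ∫⁻ ω, ENNReal.ofReal ((1 + l * (A ω / B ω))⁻¹) ∂P = ENNReal.ofReal ((1 + l ^ δ)⁻¹) := by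
  calc ∫⁻ ω, ENNReal.ofReal ((1 + l * (A ω / B ω))⁻¹) ∂P
      = ∫⁻ ω, (∫⁻ x in Ioi 0, ENNReal.ofReal (B ω * Real.exp (-(x * B ω)))
          * ENNReal.ofReal (Real.exp (-(l * x * A ω)))) ∂P := by
        refine lintegral_congr_ae ?_
        filter_upwards [hAnn, ae_pos_of_integral_exp_neg_mul_eq hBm hBnn hδ hB] with ω hAω hBω
        exact ofReal_inv_one_add_mul_div_eq_lintegral hAω hBω hl
    _ = ∫⁻ x in Ioi 0, (∫⁻ ω, ENNReal.ofReal (B ω * Real.exp (-(x * B ω))) ∂P)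
          * ENNReal.ofReal (Real.exp (-((l * x) ^ δ))) := by
        rw [lintegral_lintegral_swap (by fun_prop)]
        refine setLIntegral_congr_fun measurableSet_Ioi fun x (hx : 0 < x) => ?_
        rw [← lintegral_ofReal_exp_neg_mul_of_integral_eq hAm hAnn hA (by positivity)]
        exact lintegral_mul_eq_lintegral_mul_lintegral_of_indepFun (by fun_prop) (by fun_prop)
          (hindep.comp (φ := fun b => ENNReal.ofReal (b * Real.exp (-(x * b))))
            (ψ := fun a => ENNReal.ofReal (Real.exp (-(l * x * a)))) (by fun_prop) (by fun_prop))
    _ = ∫⁻ x in Ioi 0, ENNReal.ofReal (weibullDensity δ x)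
          * ENNReal.ofReal (Real.exp (-((l * x) ^ δ))) := by
        refine lintegral_congr_ae ?_
        filter_upwards [lintegral_mul_exp_neg_mul_ae_eq_weibullDensity hBm hBnn hδ hB] with x hx
        rw [hx]
    _ = ENNReal.ofReal ((1 + l ^ δ)⁻¹) := lintegral_Ioi_weibullDensity_mul_exp_neg_rpow hδ hl

theorem integral_inv_one_add_mul_div (hAm : Measurable A) (hBm : Measurable B)
    (hindep : IndepFun B A P) (hAnn : ∀ᵐ ω ∂P, 0 ≤ A ω) (hBnn : ∀ᵐ ω ∂P, 0 ≤ B ω) (hδ : 0 < δ)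
    (hA : ∀ s : ℝ, 0 ≤ s → ∫ ω, Real.exp (-(s * A ω)) ∂P = Real.exp (-(s ^ δ)))
    (hB : ∀ s : ℝ, 0 ≤ s → ∫ ω, Real.exp (-(s * B ω)) ∂P = Real.exp (-(s ^ δ)))
    (hl : 0 ≤ l) :
    ∫ ω, (1 + l * (A ω / B ω))⁻¹ ∂P = (1 + l ^ δ)⁻¹ := by
  have hnonneg : ∀ᵐ ω ∂P, 0 ≤ (1 + l * (A ω / B ω))⁻¹ := by
    filter_upwards [hAnn, hBnn] with ω hAω hBω
    positivity
  rw [integral_eq_lintegral_of_nonneg_ae hnonneg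
      (((hAm.div hBm).const_mul l).const_add 1).inv.aestronglyMeasurable,
    lintegral_ofReal_inv_one_add_mul_div hAm hBm hindep hAnn hBnn hδ hA hB hl,
    ENNReal.toReal_ofReal (by positivity)]

end Ratio

theorem ProbabilityTheory.IndepFun.integral_cexp_mul_mul {Ω : Type*} [MeasurableSpace Ω]
    {P : Measure Ω} [IsFiniteMeasure P] {X V : Ω → ℝ} (hXm : Measurable X) (hVm : Measurable V)
    (hindep : IndepFun V X P) {φ : ℝ → ℂ}
    (hφ : ∀ s : ℝ, ∫ ω, Complex.exp (Complex.I * ((s * X ω : ℝ) : ℂ)) ∂P = φ s) (t : ℝ) :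
    ∫ ω, Complex.exp (Complex.I * ((t * (X ω * V ω) : ℝ) : ℂ)) ∂P = ∫ ω, φ (t * V ω) ∂P := by
  set F : ℝ × ℝ → ℂ := fun p => Complex.exp (Complex.I * ((t * (p.2 * p.1) : ℝ) : ℂ)) with hF
  have hFm : Measurable F := by fun_prop
  have hFint : Integrable F ((P.map V).prod (P.map X)) :=
    (integrable_const (1 : ℝ)).mono' hFm.aestronglyMeasurable
      (ae_of_all _ fun p => by simp [hF, Complex.norm_exp])
  have hinner : ∀ v, ∫ x, F (v, x) ∂(P.map X) = φ (t * v) := fun v => by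
    rw [integral_map hXm.aemeasurable (by fun_prop), ← hφ]
    congr with ω
    simp only [hF]
    ring_nf
  have hmap : P.map (fun ω => (V ω, X ω)) = (P.map V).prod (P.map X) :=
    (indepFun_iff_map_prod_eq_prod_map_map hVm.aemeasurable hXm.aemeasurable).mp hindep
  calc ∫ ω, Complex.exp (Complex.I * ((t * (X ω * V ω) : ℝ) : ℂ)) ∂P
      = ∫ p, F p ∂((P.map V).prod (P.map X)) := by
        rw [← hmap, integral_map (by fun_prop) hFm.aestronglyMeasurable]
    _ = ∫ v, φ (t * v) ∂(P.map V) := by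
        rw [integral_prod F hFint]
        simp only [hinner]
    _ = ∫ ω, φ (t * V ω) ∂P :=
        integral_map hVm.aemeasurable
          (funext hinner ▸ hFint.integral_prod_left.aestronglyMeasurable)

theorem linnik_is_laplace_scale_mixture_general
    {Ω : Type*} [MeasurableSpace Ω] (P : Measure Ω) [IsProbabilityMeasure P]
    (α : ℝ) (hα0 : 0 < α)
    (L S S' : Ω → ℝ) (hLm : Measurable L) (hSm : Measurable S) (hS'm : Measurable S')
    (hL : ∀ t : ℝ,
      ∫ ω, Complex.exp (Complex.I * ((t * L ω : ℝ) : ℂ)) ∂P = (((1 + t ^ 2)⁻¹ : ℝ) : ℂ))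
    (hSnn : ∀ᵐ ω ∂P, 0 ≤ S ω) (hS'nn : ∀ᵐ ω ∂P, 0 ≤ S' ω)
    (hS : ∀ s : ℝ, 0 ≤ s →
      ∫ ω, Real.exp (-(s * S ω)) ∂P = Real.exp (-(s ^ (α / 2))))
    (hS' : ∀ s : ℝ, 0 ≤ s →
      ∫ ω, Real.exp (-(s * S' ω)) ∂P = Real.exp (-(s ^ (α / 2))))
    (hindep : iIndepFun ![L, S, S'] P) :
    ∀ t : ℝ,
      ∫ ω, Complex.exp (Complex.I * ((t * (L ω * Real.sqrt (S ω / S' ω)) : ℝ) : ℂ)) ∂P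
        = (((1 + |t| ^ α)⁻¹ : ℝ) : ℂ) := by
  intro t
  have hmeas : ∀ i, Measurable (![L, S, S'] i) := fun i => by fin_cases i <;> assumption
  have hS'S : IndepFun S' S P := by simpa using hindep.indepFun (show (2 : Fin 3) ≠ 1 by decide)
  have hscaleL : IndepFun (fun ω => Real.sqrt (S ω / S' ω)) L P := by
    have hpairL : IndepFun (fun ω => (S ω, S' ω)) L P := by
      simpa using hindep.indepFun_prodMk hmeas 1 2 0 (by decide) (by decide)
    exact hpairL.comp (φ := fun p => Real.sqrt (p.1 / p.2)) (ψ := id) (by fun_prop) measurable_id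
  have hsq : (t ^ 2) ^ (α / 2) = |t| ^ α := by
    rw [← sq_abs, ← Real.rpow_natCast, ← Real.rpow_mul (abs_nonneg t), Nat.cast_ofNat,
      mul_div_cancel₀ α two_ne_zero]
  calc ∫ ω, Complex.exp (Complex.I * ((t * (L ω * Real.sqrt (S ω / S' ω)) : ℝ) : ℂ)) ∂P
      = ∫ ω, (((1 + t ^ 2 * (S ω / S' ω))⁻¹ : ℝ) : ℂ) ∂P := by
        rw [hscaleL.integral_cexp_mul_mul hLm (by fun_prop) hL]
        refine integral_congr_ae ?_
        filter_upwards [hSnn, hS'nn] with ω hSω hS'ω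
        rw [mul_pow, Real.sq_sqrt (div_nonneg hSω hS'ω)]
    _ = (((1 + |t| ^ α)⁻¹ : ℝ) : ℂ) := by
        rw [integral_complex_ofReal, integral_inv_one_add_mul_div hSm hS'm hS'S hSnn hS'nn
          (half_pos hα0) hS hS' (sq_nonneg t), hsq]

/-- Let `α ∈ (0,2]`. If `Λ` is a standard Laplace random variable
(characteristic function `1/(1+t²)`) and `S, S'` are positive strictly stable random
variables with exponent `α/2`, with `Λ, S, S'` mutually independent, then `Λ·√(S/S')`
has the Linnik distribution with parameter `α`:
`E[exp (i·t·Λ·√(S/S'))] = 1/(1+|t|^α)` for all `t ∈ ℝ`. -/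
theorem linnik_is_laplace_scale_mixture
    {Ω : Type*} [MeasurableSpace Ω] (P : Measure Ω) [IsProbabilityMeasure P]
    (α : ℝ) (hα0 : 0 < α) (hα2 : α ≤ 2)
    (L S S' : Ω → ℝ) (hLm : Measurable L) (hSm : Measurable S) (hS'm : Measurable S')
    (hL : ∀ t : ℝ,
      ∫ ω, Complex.exp (Complex.I * ((t * L ω : ℝ) : ℂ)) ∂P = (((1 + t ^ 2)⁻¹ : ℝ) : ℂ))
    (hSnn : ∀ᵐ ω ∂P, 0 ≤ S ω) (hS'nn : ∀ᵐ ω ∂P, 0 ≤ S' ω)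
    (hS : ∀ s : ℝ, 0 ≤ s →
      ∫ ω, Real.exp (-(s * S ω)) ∂P = Real.exp (-(s ^ (α / 2))))
    (hS' : ∀ s : ℝ, 0 ≤ s →
      ∫ ω, Real.exp (-(s * S' ω)) ∂P = Real.exp (-(s ^ (α / 2))))
    (hindep : iIndepFun ![L, S, S'] P) :
    ∀ t : ℝ,
      ∫ ω, Complex.exp (Complex.I * ((t * (L ω * Real.sqrt (S ω / S' ω)) : ℝ) : ℂ)) ∂P
        = (((1 + |t| ^ α)⁻¹ : ℝ) : ℂ) :=
  linnik_is_laplace_scale_mixture_general P α hα0 L S S' hLm hSm hS'm hL hSnn hS'nn hS hS' hindep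
end

section
/- Scale mixtures of the Laplace distribution are identifiable: let Λ be a standard Laplace random variable, and let Y and Y' be nonnegative random variables such that Y is independent of Λ and Y' is independent of Λ. If the products Λ·Y and Λ·Y' have the same distribution, then Y and Y' have the same distribution. -/
/-!
By independence, the characteristic function of `Λ·Y` at `t` is `E[(1 + t²Y²)⁻¹]`, so the laws
of `Y` and `Y'`, seen as measures on `ℝ≥0`, give the same integral to every function
`x ↦ (1 + s x²)⁻¹` with `s ≥ 0`. By the partial fraction identity
`(1 + s x²)⁻¹ (1 + t x²)⁻¹ = (s (1 + s x²)⁻¹ - t (1 + t x²)⁻¹) / (s - t)`, and a limit `t → s`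
for squares, the closed linear span of these functions is an algebra. It separates the points of
`ℝ≥0`, so by Stone–Weierstrass the two laws agree.
-/

open MeasureTheory ProbabilityTheory Filter Set
open scoped Topology NNReal BoundedContinuousFunction

namespace Submodule

variable {R A : Type*} [CommSemiring R] [Semiring A] [Algebra R A] [TopologicalSpace A]
  [ContinuousAdd A] [ContinuousMul A] [ContinuousConstSMul R A]

theorem mul_mem_topologicalClosure_span {M : Set A}
    (hM : ∀ a ∈ M, ∀ b ∈ M, a * b ∈ (span R M).topologicalClosure) {x y : A}
    (hx : x ∈ (span R M).topologicalClosure) (hy : y ∈ (span R M).topologicalClosure) :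
    x * y ∈ (span R M).topologicalClosure := by
  have hspan : span R M * span R M ≤ (span R M).topologicalClosure := by
    rw [span_mul_span, span_le]
    rintro _ ⟨a, ha, b, hb, rfl⟩
    exact hM a ha b hb
  rw [← SetLike.mem_coe, ← (span R M).isClosed_topologicalClosure.closure_eq]
  exact map_mem_closure₂ continuous_mul hx hy fun a ha b hb => hspan (mul_mem_mul ha hb)

end Submodule

namespace BoundedContinuousFunction

variable {X : Type*} [TopologicalSpace X] [MeasurableSpace X] [OpensMeasurableSpace X]

noncomputable def integralCLM (μ : Measure X) [IsFiniteMeasure μ] : (X →ᵇ ℝ) →L[ℝ] ℝ :=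
  LinearMap.mkContinuous
    { toFun f := ∫ x, f x ∂μ
      map_add' f g := integral_add (f.integrable μ) (g.integrable μ)
      map_smul' c _ := integral_smul c _ }
    (μ.real univ) fun f => f.norm_integral_le_mul_norm μ

theorem integral_eq_of_mem_topologicalClosure_span {μ ν : Measure X} [IsFiniteMeasure μ]
    [IsFiniteMeasure ν] {M : Set (X →ᵇ ℝ)} (hM : ∀ f ∈ M, ∫ x, f x ∂μ = ∫ x, f x ∂ν)
    {f : X →ᵇ ℝ} (hf : f ∈ (Submodule.span ℝ M).topologicalClosure) :
    ∫ x, f x ∂μ = ∫ x, f x ∂ν := by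
  have hker : (Submodule.span ℝ M).topologicalClosure ≤ (integralCLM μ - integralCLM ν).ker := by
    refine Submodule.topologicalClosure_minimal _ (Submodule.span_le.mpr fun g hg => ?_)
      (ContinuousLinearMap.isClosed_ker _)
    simpa [integralCLM, sub_eq_zero] using hM g hg
  simpa [integralCLM, sub_eq_zero] using hker hf

end BoundedContinuousFunction

noncomputable def lorentzian (s : ℝ≥0) : ℝ≥0 →ᵇ ℝ :=
  .ofNormedAddCommGroup (fun x => (1 + s * (x : ℝ) ^ 2)⁻¹)
    (by fun_prop (disch := intro x; positivity)) 1
    (fun x => by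
      rw [Real.norm_of_nonneg (by positivity)]
      exact inv_le_one_of_one_le₀ (le_add_of_nonneg_right (by positivity)))

@[simp]
theorem lorentzian_apply (s x : ℝ≥0) : lorentzian s x = (1 + s * (x : ℝ) ^ 2)⁻¹ := rfl

theorem lorentzian_zero : lorentzian 0 = 1 := by
  ext x
  simp

theorem lorentzian_mul_lorentzian {s t : ℝ≥0} (hst : s ≠ t) :
    lorentzian s * lorentzian t
      = ((s : ℝ) / (s - t)) • lorentzian s + ((t : ℝ) / (t - s)) • lorentzian t := by
  have hst' : (s : ℝ) - t ≠ 0 := sub_ne_zero.mpr (NNReal.coe_injective.ne hst)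
  ext x
  simp only [BoundedContinuousFunction.coe_mul, BoundedContinuousFunction.coe_add,
    BoundedContinuousFunction.coe_smul, Pi.mul_apply, Pi.add_apply, lorentzian_apply, smul_eq_mul]
  rw [← neg_sub (s : ℝ)]
  field_simp
  ring

theorem dist_lorentzian_le {s : ℝ≥0} (hs : 0 < s) (t : ℝ≥0) :
    dist (lorentzian t) (lorentzian s) ≤ |(t : ℝ) - s| / s := by
  refine (BoundedContinuousFunction.dist_le (by positivity)).mpr fun x => ?_
  have hs' : (0 : ℝ) < s := hs
  have h1 : 0 < 1 + (s : ℝ) * (x : ℝ) ^ 2 := by positivity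
  have h2 : 0 < 1 + (t : ℝ) * (x : ℝ) ^ 2 := by positivity
  rw [lorentzian_apply, lorentzian_apply, Real.dist_eq, inv_sub_inv h2.ne' h1.ne', abs_div,
    abs_of_pos (mul_pos h2 h1), div_le_div_iff₀ (mul_pos h2 h1) hs']
  calc |1 + s * (x : ℝ) ^ 2 - (1 + t * x ^ 2)| * s = |(t : ℝ) - s| * (s * x ^ 2) := by
        rw [show 1 + s * (x : ℝ) ^ 2 - (1 + t * x ^ 2) = (s - t) * x ^ 2 by ring, abs_mul,
          abs_sub_comm, abs_of_nonneg (sq_nonneg (x : ℝ))]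
        ring
    _ ≤ |(t : ℝ) - s| * ((1 + t * x ^ 2) * (1 + s * x ^ 2)) := by
        refine mul_le_mul_of_nonneg_left ?_ (abs_nonneg _)
        nlinarith [mul_nonneg (mul_nonneg t.coe_nonneg (sq_nonneg (x : ℝ))) h1.le]

theorem continuousAt_lorentzian {s : ℝ≥0} (hs : 0 < s) : ContinuousAt lorentzian s := by
  have hlim : Tendsto (fun t : ℝ≥0 => |(t : ℝ) - s| / s) (𝓝 s) (𝓝 0) := by
    have : Continuous fun t : ℝ≥0 => |(t : ℝ) - s| / s := by fun_prop
    simpa using this.tendsto s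
  exact tendsto_iff_dist_tendsto_zero.mpr
    (squeeze_zero (fun _ => dist_nonneg) (dist_lorentzian_le hs) hlim)

section LorentzianSpan

open Submodule

theorem lorentzian_mem_topologicalClosure_span (s : ℝ≥0) :
    lorentzian s ∈ (span ℝ (range lorentzian)).topologicalClosure :=
  le_topologicalClosure _ (subset_span (mem_range_self s))

theorem lorentzian_mul_lorentzian_mem_span {s t : ℝ≥0} (hst : s ≠ t) :
    lorentzian s * lorentzian t ∈ span ℝ (range lorentzian) := by
  rw [lorentzian_mul_lorentzian hst]
  exact add_mem (smul_mem _ _ (subset_span (mem_range_self s)))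
    (smul_mem _ _ (subset_span (mem_range_self t)))

theorem lorentzian_mul_mem_topologicalClosure_span (s t : ℝ≥0) :
    lorentzian s * lorentzian t ∈ (span ℝ (range lorentzian)).topologicalClosure := by
  rcases ne_or_eq s t with hst | rfl
  · exact le_topologicalClosure _ (lorentzian_mul_lorentzian_mem_span hst)
  -- `lorentzian` is discontinuous at `0` in the sup norm, but there the square is `1`.
  rcases eq_zero_or_pos s with rfl | hs
  · simpa [lorentzian_zero] using lorentzian_mem_topologicalClosure_span 0
  have hlim : Tendsto (fun t => lorentzian s * lorentzian t) (𝓝[>] s)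
      (𝓝 (lorentzian s * lorentzian s)) :=
    ((continuousAt_lorentzian hs).tendsto.mono_left nhdsWithin_le_nhds).const_mul _
  rw [← SetLike.mem_coe, topologicalClosure_coe]
  exact mem_closure_of_tendsto hlim (eventually_mem_nhdsWithin.mono fun t ht =>
    lorentzian_mul_lorentzian_mem_span (ne_of_lt ht))

def lorentzianAlgebra : StarSubalgebra ℝ (ℝ≥0 →ᵇ ℝ) where
  carrier := (span ℝ (range lorentzian)).topologicalClosure
  add_mem' := add_mem
  zero_mem' := zero_mem _
  mul_mem' := mul_mem_topologicalClosure_span <| by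
    rintro _ ⟨s, rfl⟩ _ ⟨t, rfl⟩
    exact lorentzian_mul_mem_topologicalClosure_span s t
  algebraMap_mem' r := by
    rw [Algebra.algebraMap_eq_smul_one, ← lorentzian_zero]
    exact smul_mem _ r (lorentzian_mem_topologicalClosure_span 0)
  star_mem' {f} hf := by
    rwa [show star f = f from BoundedContinuousFunction.ext fun _ => star_trivial _]

end LorentzianSpan

theorem MeasureTheory.Measure.ext_of_forall_integral_lorentzian_eq {μ ν : Measure ℝ≥0}
    [IsFiniteMeasure μ] [IsFiniteMeasure ν]
    (h : ∀ s, ∫ x, lorentzian s x ∂μ = ∫ x, lorentzian s x ∂ν) : μ = ν := by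
  refine ext_of_forall_mem_subalgebra_integral_eq_of_pseudoEMetric_complete_countable
    (A := lorentzianAlgebra) ?_ fun f hf =>
      BoundedContinuousFunction.integral_eq_of_mem_topologicalClosure_span
        (by rintro _ ⟨s, rfl⟩; exact h s) hf
  intro x y hxy
  refine ⟨_, ⟨_, ⟨lorentzian 1, lorentzian_mem_topologicalClosure_span 1, rfl⟩, rfl⟩, ?_⟩
  simpa using hxy

section Probability

variable {Ω : Type*} [MeasurableSpace Ω] {P : Measure Ω}

theorem ProbabilityTheory.IndepFun.integral_comp_mul [IsFiniteMeasure P] {X Z : Ω → ℝ}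
    (hX : Measurable X) (hZ : Measurable Z) (hXZ : IndepFun X Z P) {E : Type*}
    [NormedAddCommGroup E] [NormedSpace ℝ E] {f : ℝ → E} (hf : Continuous f) {C : ℝ}
    (hC : ∀ x, ‖f x‖ ≤ C) :
    ∫ ω, f (X ω * Z ω) ∂P = ∫ ω, ∫ ω', f (X ω' * Z ω) ∂P ∂P := by
  have hmap : P.map (fun ω => (X ω, Z ω)) = (P.map X).prod (P.map Z) :=
    (indepFun_iff_map_prod_eq_prod_map_map hX.aemeasurable hZ.aemeasurable).mp hXZ
  have hF : Continuous fun p : ℝ × ℝ => f (p.1 * p.2) := by fun_prop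
  have hFint : Integrable (fun p : ℝ × ℝ => f (p.1 * p.2)) ((P.map X).prod (P.map Z)) :=
    .mono' (integrable_const C) hF.aestronglyMeasurable (.of_forall fun p => hC _)
  calc ∫ ω, f (X ω * Z ω) ∂P = ∫ p : ℝ × ℝ, f (p.1 * p.2) ∂((P.map X).prod (P.map Z)) := by
        rw [← hmap, integral_map (hX.prodMk hZ).aemeasurable hF.aestronglyMeasurable]
    _ = ∫ z, ∫ x, f (x * z) ∂(P.map X) ∂(P.map Z) := integral_prod_symm _ hFint
    _ = ∫ ω, ∫ ω', f (X ω' * Z ω) ∂P ∂P := by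
        rw [integral_map hZ.aemeasurable hFint.integral_prod_right.aestronglyMeasurable]
        congr 1 with ω
        exact integral_map hX.aemeasurable (hf.comp (continuous_mul_const _)).aestronglyMeasurable

theorem integral_cexp_mul_mul_eq_integral_inv_one_add_sq [IsFiniteMeasure P] {L Z : Ω → ℝ}
    (hLm : Measurable L) (hZm : Measurable Z)
    (hL : ∀ t : ℝ,
      ∫ ω, Complex.exp (Complex.I * ((t * L ω : ℝ) : ℂ)) ∂P = (((1 + t ^ 2)⁻¹ : ℝ) : ℂ))
    (hLZ : IndepFun L Z P) (t : ℝ) :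
    ∫ ω, Complex.exp (Complex.I * ((t * (L ω * Z ω) : ℝ) : ℂ)) ∂P
      = ((∫ ω, (1 + (t * Z ω) ^ 2)⁻¹ ∂P : ℝ) : ℂ) := by
  have hbound (x : ℝ) : ‖Complex.exp (Complex.I * ((t * x : ℝ) : ℂ))‖ ≤ 1 := by
    rw [mul_comm, Complex.norm_exp_ofReal_mul_I]
  rw [hLZ.integral_comp_mul (f := fun x => Complex.exp (Complex.I * ((t * x : ℝ) : ℂ))) hLm hZm
    (by fun_prop) hbound, ← integral_complex_ofReal]
  congr 1 with ω
  simp_rw [show ∀ ω', t * (L ω' * Z ω) = t * Z ω * L ω' from fun _ => by ring]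
  exact hL _

theorem integral_lorentzian_map_toNNReal {Y : Ω → ℝ} (hYm : Measurable Y)
    (hYnn : ∀ᵐ ω ∂P, 0 ≤ Y ω) (s : ℝ≥0) :
    ∫ x, lorentzian s x ∂(P.map fun ω => (Y ω).toNNReal) = ∫ ω, (1 + (√s * Y ω) ^ 2)⁻¹ ∂P := by
  rw [integral_map hYm.real_toNNReal.aemeasurable (lorentzian s).continuous.aestronglyMeasurable]
  refine integral_congr_ae (hYnn.mono fun ω hω => ?_)
  simp only [lorentzian_apply, Real.coe_toNNReal _ hω, mul_pow, Real.sq_sqrt s.coe_nonneg]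

theorem map_coe_map_toNNReal {Y : Ω → ℝ} (hYm : Measurable Y) (hYnn : ∀ᵐ ω ∂P, 0 ≤ Y ω) :
    (P.map fun ω => (Y ω).toNNReal).map ((↑) : ℝ≥0 → ℝ) = P.map Y := by
  rw [Measure.map_map measurable_coe_nnreal_real hYm.real_toNNReal]
  exact Measure.map_congr (hYnn.mono fun ω hω => Real.coe_toNNReal _ hω)

end Probability

/-- Scale mixtures of the Laplace distribution are identifiable.
If `Λ` is a standard Laplace random variable (characteristic function `1/(1+t²)`),
`Y` and `Y'` are nonnegative random variables, each independent of `Λ`, and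
`Λ·Y` and `Λ·Y'` have the same distribution, then `Y` and `Y'` have the same
distribution. -/
theorem laplace_scale_mixtures_identifiable
    {Ω : Type*} [MeasurableSpace Ω] (P : Measure Ω) [IsProbabilityMeasure P]
    (L Y Y' : Ω → ℝ) (hLm : Measurable L) (hYm : Measurable Y) (hY'm : Measurable Y')
    (hL : ∀ t : ℝ,
      ∫ ω, Complex.exp (Complex.I * ((t * L ω : ℝ) : ℂ)) ∂P = (((1 + t ^ 2)⁻¹ : ℝ) : ℂ))
    (hYnn : ∀ᵐ ω ∂P, 0 ≤ Y ω) (hY'nn : ∀ᵐ ω ∂P, 0 ≤ Y' ω)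
    (hindepY : IndepFun L Y P) (hindepY' : IndepFun L Y' P)
    (heq : Measure.map (fun ω => L ω * Y ω) P = Measure.map (fun ω => L ω * Y' ω) P) :
    Measure.map Y P = Measure.map Y' P := by
  have hmix (t : ℝ) : ∫ ω, (1 + (t * Y ω) ^ 2)⁻¹ ∂P = ∫ ω, (1 + (t * Y' ω) ^ 2)⁻¹ ∂P := by
    have hexp : Continuous fun x : ℝ => Complex.exp (Complex.I * ((t * x : ℝ) : ℂ)) := by
      fun_prop
    have h := congrArg (fun μ => ∫ x, Complex.exp (Complex.I * ((t * x : ℝ) : ℂ)) ∂μ) heq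
    rw [integral_map (φ := fun ω => L ω * Y ω) (hLm.mul hYm).aemeasurable
        hexp.aestronglyMeasurable,
      integral_map (φ := fun ω => L ω * Y' ω) (hLm.mul hY'm).aemeasurable
        hexp.aestronglyMeasurable,
      integral_cexp_mul_mul_eq_integral_inv_one_add_sq hLm hYm hL hindepY,
      integral_cexp_mul_mul_eq_integral_inv_one_add_sq hLm hY'm hL hindepY'] at h
    exact_mod_cast h
  have hν : P.map (fun ω => (Y ω).toNNReal) = P.map (fun ω => (Y' ω).toNNReal) :=
    Measure.ext_of_forall_integral_lorentzian_eq fun s => by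
      rw [integral_lorentzian_map_toNNReal hYm hYnn, integral_lorentzian_map_toNNReal hY'm hY'nn,
        hmix]
  rw [← map_coe_map_toNNReal hYm hYnn, ← map_coe_map_toNNReal hY'm hY'nn, hν]
end

section
/- Let X be a standard normal random variable and W a standard exponential random variable, independent of X. Then |X|·√(2W) has the standard exponential distribution: P(|X|·√(2W) ≤ x) = 1 - exp(-x) for all x ≥ 0. Equivalently, the exponential distribution is a scale mixture of half-normal laws. -/
/-! Conditioning on `X = t`, the event `|t| √(2W) > x` is `{W > x² / (2t²)}`, so
`P(|X| √(2W) > x) = E[exp (-x² / (2X²))]`. Completing the square, the standard normal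
density `φ` satisfies `φ(t) exp (-x² / (2t²)) = e^{-x} φ(t - x/t)`, and the
Cauchy–Schlömilch substitution `u = t - x/t`, a bijection of `(0, ∞)` onto `ℝ`, gives
`∫₀^∞ φ(t - x/t) dt = 1/2`: the excess `x/t²` of its Jacobian is absorbed by the involution
`t ↦ x/t` of `(0, ∞)`, which maps `t - x/t` to its negative. -/

open MeasureTheory ProbabilityTheory Set Real

section CauchySchlomilch

variable {a : ℝ}

lemma image_sub_div_Ioi_zero (ha : 0 < a) : (fun t : ℝ => t - a / t) '' Ioi 0 = univ := by
  refine eq_univ_of_forall fun u => ?_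
  -- the positive root of `t ^ 2 - u t - a = 0`
  have hs : √(u ^ 2 + 4 * a) ^ 2 = u ^ 2 + 4 * a := sq_sqrt (by positivity)
  have hu : |u| < √(u ^ 2 + 4 * a) := by
    rw [← sqrt_sq_eq_abs]
    exact sqrt_lt_sqrt (sq_nonneg u) (by linarith)
  have hpos : 0 < u + √(u ^ 2 + 4 * a) := by linarith [neg_abs_le u]
  refine ⟨_, half_pos hpos, ?_⟩
  field_simp [hpos.ne']
  nlinarith

lemma strictMonoOn_sub_div (ha : 0 < a) : StrictMonoOn (fun t : ℝ => t - a / t) (Ioi 0) :=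
  fun _ hs _ _ hst => sub_lt_sub hst (div_lt_div_of_pos_left ha hs hst)

lemma image_const_div_Ioi_zero (ha : 0 < a) : (fun t : ℝ => a / t) '' Ioi 0 = Ioi 0 := by
  refine Subset.antisymm (image_subset_iff.2 fun t ht => div_pos ha ht) fun s hs => ?_
  exact ⟨a / s, div_pos ha hs, div_div_cancel₀ ha.ne'⟩

lemma strictAntiOn_const_div (ha : 0 < a) : StrictAntiOn (fun t : ℝ => a / t) (Ioi 0) :=
  fun _ hs _ _ hst => div_lt_div_of_pos_left ha hs hst

lemma hasDerivAt_const_div {t : ℝ} (ht : t ≠ 0) :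
    HasDerivAt (fun t : ℝ => a / t) (-(a / t ^ 2)) t :=
  ((hasDerivAt_const t a).div (hasDerivAt_id' t) ht).congr_deriv (by ring)

lemma hasDerivAt_sub_div {t : ℝ} (ht : t ≠ 0) :
    HasDerivAt (fun t : ℝ => t - a / t) (1 + a / t ^ 2) t :=
  ((hasDerivAt_id' t).sub (hasDerivAt_const_div ht)).congr_deriv (by ring)

lemma one_le_one_add_div_sq (ha : 0 ≤ a) (t : ℝ) : 1 ≤ 1 + a / t ^ 2 :=
  le_add_of_nonneg_right (by positivity)

lemma abs_one_add_div_sq (ha : 0 ≤ a) (t : ℝ) : |1 + a / t ^ 2| = 1 + a / t ^ 2 :=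
  abs_of_pos (zero_lt_one.trans_le (one_le_one_add_div_sq ha t))

variable {E : Type*} [NormedAddCommGroup E] [NormedSpace ℝ E] {g : ℝ → E}

lemma integral_Ioi_one_add_div_sq_smul_comp_sub_div (ha : 0 < a) (g : ℝ → E) :
    ∫ t in Ioi 0, (1 + a / t ^ 2) • g (t - a / t) = ∫ u, g u := by
  have h := integral_image_eq_integral_abs_deriv_smul measurableSet_Ioi
    (fun t ht => (hasDerivAt_sub_div (ne_of_gt ht)).hasDerivWithinAt)
    (strictMonoOn_sub_div ha).injOn g
  simpa only [image_sub_div_Ioi_zero ha, setIntegral_univ, abs_one_add_div_sq ha.le] using h.symm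

lemma integrableOn_Ioi_one_add_div_sq_smul_comp_sub_div (ha : 0 < a) (hg : Integrable g) :
    IntegrableOn (fun t => (1 + a / t ^ 2) • g (t - a / t)) (Ioi 0) := by
  have h := integrableOn_image_iff_integrableOn_abs_deriv_smul measurableSet_Ioi
    (fun t ht => (hasDerivAt_sub_div (ne_of_gt ht)).hasDerivWithinAt)
    (strictMonoOn_sub_div ha).injOn g
  simp only [image_sub_div_Ioi_zero ha, abs_one_add_div_sq ha.le] at h
  exact h.1 hg.integrableOn

lemma integrableOn_Ioi_comp_sub_div (ha : 0 < a) (hg : Integrable g) :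
    IntegrableOn (fun t => g (t - a / t)) (Ioi 0) := by
  have hpos (t : ℝ) : 0 < 1 + a / t ^ 2 := zero_lt_one.trans_le (one_le_one_add_div_sq ha.le t)
  refine IntegrableOn.congr_fun
    ((integrableOn_Ioi_one_add_div_sq_smul_comp_sub_div ha hg).bdd_smul
      (φ := fun t => (1 + a / t ^ 2)⁻¹) 1 (by fun_prop : Measurable _).aestronglyMeasurable
      (ae_of_all _ fun t => ?_))
    (fun t _ => ?_) measurableSet_Ioi
  · rw [norm_inv, norm_of_nonneg (hpos t).le]
    exact inv_le_one_of_one_le₀ (one_le_one_add_div_sq ha.le t)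
  · simp only [Pi.smul_apply', smul_smul, inv_mul_cancel₀ (hpos t).ne', one_smul]

lemma integral_Ioi_div_sq_smul_comp_sub_div (ha : 0 < a) (hg_even : ∀ u, g (-u) = g u) :
    ∫ t in Ioi 0, (a / t ^ 2) • g (t - a / t) = ∫ t in Ioi 0, g (t - a / t) := by
  have h := integral_image_eq_integral_abs_deriv_smul measurableSet_Ioi
    (fun t ht => (hasDerivAt_const_div (ne_of_gt ht)).hasDerivWithinAt)
    (strictAntiOn_const_div ha).injOn (fun s => g (s - a / s))
  rw [image_const_div_Ioi_zero ha] at h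
  rw [h]
  refine setIntegral_congr_fun measurableSet_Ioi fun t (ht : 0 < t) => ?_
  -- `t ↦ a / t` maps `t - a / t` to its negative
  rw [abs_neg, abs_of_pos (by positivity), div_div_cancel₀ ha.ne', ← neg_sub, hg_even]

theorem two_smul_integral_Ioi_comp_sub_div (hg : Integrable g) (hg_even : ∀ u, g (-u) = g u)
    (ha : 0 < a) : (2 : ℝ) • ∫ t in Ioi 0, g (t - a / t) = ∫ u, g u := by
  have h := integral_sub (integrableOn_Ioi_one_add_div_sq_smul_comp_sub_div ha hg)
    (integrableOn_Ioi_comp_sub_div ha hg)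
  rw [integral_Ioi_one_add_div_sq_smul_comp_sub_div ha] at h
  simp only [add_smul, one_smul, add_sub_cancel_left] at h
  rw [integral_Ioi_div_sq_smul_comp_sub_div ha hg_even] at h
  rw [two_smul, eq_sub_iff_add_eq.1 h]

end CauchySchlomilch

lemma gaussianPDFReal_zero_neg (v : NNReal) (u : ℝ) :
    gaussianPDFReal 0 v (-u) = gaussianPDFReal 0 v u := by
  simp [gaussianPDFReal]

-- completing the square: `t ^ 2 + x ^ 2 / t ^ 2 = (t - x / t) ^ 2 + 2 x`
lemma gaussianPDFReal_mul_exp_neg_sq_div {x t : ℝ} (ht : t ≠ 0) :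
    gaussianPDFReal 0 1 t * exp (-(x ^ 2 / (2 * t ^ 2)))
      = exp (-x) * gaussianPDFReal 0 1 (t - x / t) := by
  simp only [gaussianPDFReal, NNReal.coe_one, mul_one, sub_zero]
  rw [mul_assoc, ← exp_add, mul_left_comm, ← exp_add]
  congr 2
  field_simp
  ring

theorem integral_exp_neg_sq_div_gaussianReal {x : ℝ} (hx : 0 ≤ x) :
    ∫ t, exp (-(x ^ 2 / (2 * t ^ 2))) ∂gaussianReal 0 1 = exp (-x) := by
  rcases hx.eq_or_lt with rfl | hx
  · simp
  set h : ℝ → ℝ := fun t => gaussianPDFReal 0 1 t * exp (-(x ^ 2 / (2 * t ^ 2)))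
  have h_abs (t : ℝ) : h |t| = h t := by simp [h, gaussianPDFReal, sq_abs]
  calc ∫ t, exp (-(x ^ 2 / (2 * t ^ 2))) ∂gaussianReal 0 1
      = ∫ t, h |t| := by
        simp_rw [h_abs, h, integral_gaussianReal_eq_integral_smul one_ne_zero, smul_eq_mul]
    _ = 2 * ∫ t in Ioi 0, exp (-x) * gaussianPDFReal 0 1 (t - x / t) := by
        rw [integral_comp_abs]
        congr 1
        exact setIntegral_congr_fun measurableSet_Ioi fun t ht =>
          gaussianPDFReal_mul_exp_neg_sq_div (ne_of_gt ht)
    _ = exp (-x) := by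
        rw [integral_const_mul, mul_left_comm, ← smul_eq_mul 2,
          two_smul_integral_Ioi_comp_sub_div (integrable_gaussianPDFReal 0 1)
            (gaussianPDFReal_zero_neg 1) hx,
          integral_gaussianPDFReal_eq_one 0 one_ne_zero, mul_one]

lemma integrable_exp_neg_sq_div {μ : Measure ℝ} [IsFiniteMeasure μ] (x : ℝ) :
    Integrable (fun t => exp (-(x ^ 2 / (2 * t ^ 2)))) μ := by
  refine .of_bound (by fun_prop : Measurable _).aestronglyMeasurable 1 (ae_of_all _ fun t => ?_)
  rw [norm_of_nonneg (exp_nonneg _), exp_le_one_iff, neg_nonpos]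
  positivity

theorem ProbabilityTheory.IndepFun.measure_preimage_prodMk_eq_lintegral
    {Ω α β : Type*} [MeasurableSpace Ω] [MeasurableSpace α] [MeasurableSpace β]
    {P : Measure Ω} [IsFiniteMeasure P] {X : Ω → α} {Y : Ω → β}
    (hX : Measurable X) (hY : Measurable Y) (hXY : IndepFun X Y P)
    {s : Set (α × β)} (hs : MeasurableSet s) :
    P ((fun ω => (X ω, Y ω)) ⁻¹' s) = ∫⁻ a, P.map Y (Prod.mk a ⁻¹' s) ∂P.map X := by
  rw [← Measure.map_apply (hX.prodMk hY) hs,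
    (indepFun_iff_map_prod_eq_prod_map_map hX.aemeasurable hY.aemeasurable).1 hXY,
    Measure.prod_apply hs]

lemma preimage_prodMk_setOf_lt_abs_mul_sqrt_two_mul {x t : ℝ} (hx : 0 ≤ x) (ht : t ≠ 0) :
    Prod.mk t ⁻¹' {p : ℝ × ℝ | x < |p.1| * √(2 * p.2)} = Ioi (x ^ 2 / (2 * t ^ 2)) := by
  ext w
  have ht : 0 < |t| := abs_pos.2 ht
  simp only [mem_preimage, mem_ofPred_eq, mem_Ioi]
  rw [mul_comm, ← div_lt_iff₀ ht, lt_sqrt (by positivity), div_pow, sq_abs,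
    div_lt_iff₀ (by positivity), div_lt_iff₀ (by positivity)]
  constructor <;> intro h <;> linarith

/-- If `X` is a standard normal random variable and `W` is an independent
standard exponential random variable, then `|X|·√(2W)` has the standard exponential
distribution: `P(|X|·√(2W) ≤ x) = 1 - exp (-x)` for all `x ≥ 0`. Equivalently, the
exponential distribution is a scale mixture of half-normal laws. -/
theorem exponential_is_halfnormal_scale_mixture
    {Ω : Type*} [MeasurableSpace Ω] (P : Measure Ω) [IsProbabilityMeasure P]
    (X W : Ω → ℝ) (hXm : Measurable X) (hWm : Measurable W)
    (hX : Measure.map X P = gaussianReal 0 1)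
    (hW : ∀ x : ℝ, 0 ≤ x → P {ω | x < W ω} = ENNReal.ofReal (Real.exp (-x)))
    (hindep : IndepFun X W P) :
    ∀ x : ℝ, 0 ≤ x →
      P {ω | |X ω| * Real.sqrt (2 * W ω) ≤ x} = ENNReal.ofReal (1 - Real.exp (-x)) := by
  intro x hx
  set S : Set (ℝ × ℝ) := {p | x < |p.1| * √(2 * p.2)}
  have hS : MeasurableSet S := measurableSet_lt measurable_const (by fun_prop)
  have := nullSingletonClass_gaussianReal (μ := 0) one_ne_zero
  have h_tail : P ((fun ω => (X ω, W ω)) ⁻¹' S) = ENNReal.ofReal (exp (-x)) :=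
    calc P ((fun ω => (X ω, W ω)) ⁻¹' S)
        = ∫⁻ t, P.map W (Prod.mk t ⁻¹' S) ∂gaussianReal 0 1 := by
          rw [hindep.measure_preimage_prodMk_eq_lintegral hXm hWm hS, hX]
      _ = ∫⁻ t, ENNReal.ofReal (exp (-(x ^ 2 / (2 * t ^ 2)))) ∂gaussianReal 0 1 := by
          refine lintegral_congr_ae ?_
          filter_upwards [Measure.ae_ne _ 0] with t ht
          rw [show Prod.mk t ⁻¹' S = _ from preimage_prodMk_setOf_lt_abs_mul_sqrt_two_mul hx ht,
            Measure.map_apply hWm measurableSet_Ioi]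
          exact hW _ (by positivity)
      _ = ENNReal.ofReal (exp (-x)) := by
          rw [← ofReal_integral_eq_lintegral_ofReal (integrable_exp_neg_sq_div x)
            (ae_of_all _ fun _ => exp_nonneg _), integral_exp_neg_sq_div_gaussianReal hx]
  have h_compl : {ω | |X ω| * √(2 * W ω) ≤ x} = ((fun ω => (X ω, W ω)) ⁻¹' S)ᶜ := by
    ext; simp [S]
  rw [h_compl, prob_compl_eq_one_sub (hS.preimage (hXm.prodMk hWm)), h_tail,
    ← ENNReal.ofReal_one, ENNReal.ofReal_sub _ (exp_nonneg _)]
end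

section
/- The real part of the characteristic function of any mixed exponential distribution is the characteristic function of a normal scale mixture. Precisely: let U be any nonnegative random variable, W a standard exponential random variable, X a standard normal random variable, and Z a Rademacher random variable, with U, W, X, Z mutually independent. Then Z·W·U and X·√(2W)·U have the same distribution; equivalently, E[cos(t·W·U)] = E[exp(-t²·W·U²)] for all t ∈ ℝ. -/
open MeasureTheory ProbabilityTheory Filter Set
open scoped Topology ENNReal NNReal

/-!
For `a ∈ ℝ`, the exponential law satisfies `E cos (a W) = 1 / (1 + a²) = E exp (-a² W)`, both
being values of `E exp (z W) = 1 / (1 - z)` (`Re z < 1`). Integrating over the independent `U`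
(Fubini) gives `E cos (t W U) = E exp (-t² W U²)`. For the equality of laws, compare
characteristic functions: the symmetric sign `Z` turns `E exp (i t Z V)` into `E cos (t V)`, and
the standard Gaussian `X` turns `E exp (i t X S)` into `E exp (-t² S² / 2)`; with `V = W U` and
`S = √(2W) U` these are the two sides of the previous identity.
-/

namespace ProbabilityTheory

section Independence

variable {Ω α β E : Type*} [MeasurableSpace Ω] {P : Measure Ω} [IsProbabilityMeasure P]
  [MeasurableSpace α] [MeasurableSpace β] [NormedAddCommGroup E] [NormedSpace ℝ E]

lemma IndepFun.integral_comp_eq_integral_integral_s12 {X : Ω → α} {Y : Ω → β} (hXY : IndepFun X Y P)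
    (hX : AEMeasurable X P) (hY : AEMeasurable Y P) {g : α → β → E}
    (hg : Integrable (Function.uncurry g) ((P.map X).prod (P.map Y))) :
    ∫ ω, g (X ω) (Y ω) ∂P = ∫ y, ∫ x, g x y ∂P.map X ∂P.map Y := by
  have hmap := hXY.map_prod_eq_prod_map_map hX hY
  calc ∫ ω, g (X ω) (Y ω) ∂P = ∫ p, Function.uncurry g p ∂P.map (fun ω ↦ (X ω, Y ω)) :=
        (integral_map (hX.prodMk hY) (hmap ▸ hg.1)).symm
    _ = ∫ y, ∫ x, g x y ∂P.map X ∂P.map Y := by rw [hmap, integral_prod_symm _ hg]; rfl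

lemma IndepFun.charFun_map_mul {X Y : Ω → ℝ} (hXY : IndepFun X Y P) (hX : Measurable X)
    (hY : Measurable Y) (t : ℝ) :
    charFun (P.map (fun ω ↦ X ω * Y ω)) t = ∫ y, charFun (P.map X) (t * y) ∂P.map Y := by
  let g : ℝ → ℝ → ℂ := fun x y ↦ Complex.exp (↑(t * y * x) * Complex.I)
  have hg : Integrable (Function.uncurry g) ((P.map X).prod (P.map Y)) :=
    .of_bound (by fun_prop) 1 (ae_of_all _ fun _ ↦ (Complex.norm_exp_ofReal_mul_I _).le)
  simp_rw [charFun_apply_real, ← Complex.ofReal_mul]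
  rw [integral_map (by fun_prop) (by fun_prop), ← hXY.integral_comp_eq_integral_integral_s12
    hX.aemeasurable hY.aemeasurable hg]
  simp only [g, mul_comm, mul_left_comm]

end Independence

section Exponential

variable {E : Type*} [NormedAddCommGroup E] [NormedSpace ℝ E]

lemma integral_expMeasure {r : ℝ} (hr : 0 < r) (g : ℝ → E) :
    ∫ w, g w ∂expMeasure r = ∫ w in Ioi 0, (r * Real.exp (-(r * w))) • g w := by
  have hpdf : ∀ w, (exponentialPDF r w).toReal • g w
      = (Ici 0).indicator (fun w ↦ (r * Real.exp (-(r * w))) • g w) w := by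
    intro w
    rw [exponentialPDF_eq, ENNReal.toReal_ofReal (by positivity)]
    by_cases hw : 0 ≤ w <;> simp [hw]
  change ∫ w, g w ∂volume.withDensity (exponentialPDF r) = _
  rw [integral_withDensity_eq_integral_toReal_smul
      (f := exponentialPDF r) (measurable_exponentialPDFReal r).ennreal_ofReal
      (ae_of_all _ fun _ ↦ ENNReal.ofReal_lt_top)]
  simp_rw [hpdf]
  rw [integral_indicator measurableSet_Ici, integral_Ici_eq_integral_Ioi]

lemma integral_cexp_mul_expMeasure {r : ℝ} (hr : 0 < r) {z : ℂ} (hz : z.re < r) :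
    ∫ w, Complex.exp (z * w) ∂expMeasure r = r / (r - z) := by
  have hre : (z - r).re < 0 := by simpa using hz
  have hexp : ∀ w : ℝ, (r * Real.exp (-(r * w))) • Complex.exp (z * w)
      = r * Complex.exp ((z - r) * w) := by
    intro w
    rw [Complex.real_smul, Complex.ofReal_mul, Complex.ofReal_exp, mul_assoc, ← Complex.exp_add]
    push_cast
    ring_nf
  simp_rw [integral_expMeasure hr, hexp]
  rw [integral_const_mul, integral_exp_mul_complex_Ioi hre 0]
  simp only [Complex.ofReal_zero, mul_zero, Complex.exp_zero]
  rw [← neg_sub z, div_neg, neg_div, mul_neg, mul_one_div]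

lemma integral_exp_neg_mul_expMeasure {r b : ℝ} (hr : 0 < r) (hb : -r < b) :
    ∫ w, Real.exp (-(b * w)) ∂expMeasure r = r / (r + b) := by
  apply Complex.ofReal_injective
  rw [← integral_complex_ofReal]
  push_cast
  simp_rw [← neg_mul]
  rw [integral_cexp_mul_expMeasure hr (by rw [Complex.neg_re, Complex.ofReal_re]; linarith), sub_neg_eq_add]

lemma integral_cos_mul_expMeasure {r : ℝ} (hr : 0 < r) (a : ℝ) :
    ∫ w, Real.cos (a * w) ∂expMeasure r = r ^ 2 / (r ^ 2 + a ^ 2) := by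
  have := isProbabilityMeasure_expMeasure hr
  have hcos : ∀ w : ℝ, Real.cos (a * w) = (Complex.exp (a * Complex.I * w)).re := by
    intro w
    rw [mul_right_comm, ← Complex.ofReal_mul, Complex.exp_ofReal_mul_I_re]
  simp_rw [hcos, ← RCLike.re_to_complex]
  rw [integral_re (.of_bound (by fun_prop) 1 (ae_of_all _ fun w ↦ by
      rw [mul_right_comm, ← Complex.ofReal_mul, Complex.norm_exp_ofReal_mul_I])),
    integral_cexp_mul_expMeasure hr (by simpa using hr)]
  have hpos : r ^ 2 + a ^ 2 ≠ 0 := by positivity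
  simp only [RCLike.re_to_complex, Complex.div_re, Complex.normSq_apply, Complex.ofReal_re,
    Complex.ofReal_im, Complex.sub_re, Complex.sub_im, Complex.mul_re, Complex.mul_im,
    Complex.I_re, Complex.I_im, mul_zero, mul_one, zero_mul, sub_self, sub_zero, zero_sub,
    add_zero, mul_neg, neg_mul, neg_neg, neg_zero, zero_div]
  field_simp

lemma ae_nonneg_expMeasure (r : ℝ) : ∀ᵐ w ∂expMeasure r, 0 ≤ w := by
  simp_rw [ae_iff, not_le]
  change volume.withDensity (exponentialPDF r) (Iio 0) = 0
  rw [withDensity_apply _ measurableSet_Iio]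
  exact lintegral_exponentialPDF_of_nonpos le_rfl

variable {Ω : Type*} [MeasurableSpace Ω] {P : Measure Ω} [IsProbabilityMeasure P]

lemma map_eq_expMeasure_of_tail_eq {W : Ω → ℝ} {r : ℝ} (hr : 0 < r) (hW : Measurable W)
    (h : ∀ x, 0 ≤ x → P {ω | x < W ω} = ENNReal.ofReal (Real.exp (-(r * x)))) :
    P.map W = expMeasure r := by
  have hIic : ∀ x, 0 ≤ x → P.map W (Iic x) = ENNReal.ofReal (1 - Real.exp (-(r * x))) := by
    intro x hx
    rw [Measure.map_apply hW measurableSet_Iic, ← compl_Ioi, preimage_compl,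
      prob_compl_eq_one_sub (hW measurableSet_Ioi), ENNReal.ofReal_sub _ (Real.exp_pos _).le,
      ENNReal.ofReal_one]
    exact congr_arg (1 - ·) (h x hx)
  have := isProbabilityMeasure_expMeasure hr
  refine (Measure.ext_of_Iic _ _ fun x ↦ ?_).symm
  rw [← ofReal_cdf, cdf_expMeasure_eq hr]
  split_ifs with hx
  · exact (hIic x hx).symm
  · rw [ENNReal.ofReal_zero, eq_comm]
    exact measure_mono_null (Iic_subset_Iic.mpr (not_le.mp hx).le) (by simpa using hIic 0 le_rfl)

lemma IndepFun.integral_cos_mul_eq_integral_exp_neg_mul_sq {W U : Ω → ℝ} (hWU : IndepFun W U P)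
    (hW : Measurable W) (hU : Measurable U) (hWlaw : P.map W = expMeasure 1) (t : ℝ) :
    ∫ ω, Real.cos (t * (W ω * U ω)) ∂P = ∫ ω, Real.exp (-(t ^ 2 * W ω * U ω ^ 2)) ∂P := by
  have := isProbabilityMeasure_expMeasure one_pos
  rw [hWU.integral_comp_eq_integral_integral_s12 hW.aemeasurable hU.aemeasurable
      (g := fun w u ↦ Real.cos (t * (w * u)))
      (.of_bound (by fun_prop) 1 (ae_of_all _ fun _ ↦ Real.abs_cos_le_one _)),
    hWU.integral_comp_eq_integral_integral_s12 hW.aemeasurable hU.aemeasurable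
      (g := fun w u ↦ Real.exp (-(t ^ 2 * w * u ^ 2))) ?_, hWlaw]
  · refine integral_congr_ae (ae_of_all _ fun u ↦ ?_)
    simp_rw [show ∀ w, t * (w * u) = t * u * w from fun w ↦ by ring,
      show ∀ w, t ^ 2 * w * u ^ 2 = t ^ 2 * u ^ 2 * w from fun w ↦ by ring]
    rw [integral_cos_mul_expMeasure one_pos,
      integral_exp_neg_mul_expMeasure one_pos (neg_one_lt_zero.trans_le (by positivity))]
    ring
  · refine .of_bound (by fun_prop) 1 ?_
    filter_upwards [Measure.quasiMeasurePreserving_fst.ae (hWlaw ▸ ae_nonneg_expMeasure 1)]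
      with p hp
    simp only [Function.uncurry, Real.norm_eq_abs, Real.abs_exp, Real.exp_le_one_iff,
      neg_nonpos]
    positivity

end Exponential

section CharFun

variable {Ω : Type*} [MeasurableSpace Ω] {P : Measure Ω} [IsProbabilityMeasure P]

noncomputable def rademacherMeasure : Measure ℝ :=
  (2⁻¹ : ℝ≥0∞) • Measure.dirac 1 + (2⁻¹ : ℝ≥0∞) • Measure.dirac (-1)

lemma map_eq_rademacherMeasure {Z : Ω → ℝ} (hZ : Measurable Z) (h₁ : P {ω | Z ω = 1} = 2⁻¹)
    (h₂ : P {ω | Z ω = -1} = 2⁻¹) : P.map Z = rademacherMeasure := by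
  have hae : ∀ᵐ ω ∂P, Z ω = 1 ∨ Z ω = -1 := by
    rw [ae_iff_measure_eq (p := fun ω ↦ Z ω = 1 ∨ Z ω = -1) ((measurableSet_eq_fun hZ
        measurable_const).union (measurableSet_eq_fun hZ measurable_const)).nullMeasurableSet,
      ofPred_or, measure_univ,
      measure_union _ (measurableSet_eq_fun hZ measurable_const), h₁, h₂,
      ENNReal.inv_two_add_inv_two]
    exact disjoint_left.mpr fun ω (h : Z ω = 1) (h' : Z ω = -1) ↦ by norm_num [h] at h'
  rw [(Measure.ae_eq_or_eq_iff_map_eq_dirac_add_dirac hZ.aemeasurable (by norm_num)).1 hae]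
  exact congr_arg₂ (· + ·) (congr_arg (· • _) h₁) (congr_arg (· • _) h₂)

lemma charFun_rademacherMeasure (t : ℝ) : charFun rademacherMeasure t = Real.cos t := by
  rw [rademacherMeasure, charFun_apply_real, integral_add_measure, integral_smul_measure,
    integral_smul_measure, integral_dirac, integral_dirac, Complex.ofReal_cos, Complex.cos]
  · simp only [ENNReal.toReal_inv, ENNReal.toReal_ofNat, Complex.ofReal_one, mul_one,
      Complex.real_smul, Complex.ofReal_inv, Complex.ofReal_ofNat, Complex.ofReal_neg, mul_neg,
      neg_mul]
    ring
  all_goals exact (integrable_dirac enorm_lt_top).smul_measure (by simp)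

lemma IndepFun.charFun_map_mul_of_map_eq_rademacherMeasure {Z V : Ω → ℝ} (hZV : IndepFun Z V P)
    (hZ : Measurable Z) (hV : Measurable V) (hZlaw : P.map Z = rademacherMeasure) (t : ℝ) :
    charFun (P.map fun ω ↦ Z ω * V ω) t = ∫ ω, Real.cos (t * V ω) ∂P := by
  rw [hZV.charFun_map_mul hZ hV, hZlaw, ← integral_complex_ofReal]
  simp_rw [charFun_rademacherMeasure]
  exact integral_map hV.aemeasurable (by fun_prop)

lemma IndepFun.charFun_map_mul_of_map_eq_gaussianReal {X S : Ω → ℝ} {v : ℝ≥0}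
    (hXS : IndepFun X S P) (hX : Measurable X) (hS : Measurable S)
    (hXlaw : P.map X = gaussianReal 0 v) (t : ℝ) :
    charFun (P.map fun ω ↦ X ω * S ω) t = ∫ ω, Real.exp (-(v * (t * S ω) ^ 2 / 2)) ∂P := by
  rw [hXS.charFun_map_mul hX hS, hXlaw, ← integral_complex_ofReal,
    integral_map hS.aemeasurable (by fun_prop)]
  simp_rw [charFun_gaussianReal]
  push_cast
  simp_rw [mul_zero, zero_mul, zero_sub]

end CharFun

end ProbabilityTheory

theorem re_charFun_mixed_exponential_is_normal_scale_mixture_general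
    {Ω : Type*} [MeasurableSpace Ω] (P : Measure Ω) [IsProbabilityMeasure P]
    (U W X Z : Ω → ℝ)
    (hUm : Measurable U) (hWm : Measurable W) (hXm : Measurable X) (hZm : Measurable Z)
    (hW : ∀ x : ℝ, 0 ≤ x → P {ω | x < W ω} = ENNReal.ofReal (Real.exp (-x)))
    (hX : Measure.map X P = gaussianReal 0 1)
    (hZ : P {ω | Z ω = 1} = 1 / 2 ∧ P {ω | Z ω = -1} = 1 / 2)
    (hindep : iIndepFun ![U, W, X, Z] P) :
    Measure.map (fun ω => Z ω * W ω * U ω) P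
        = Measure.map (fun ω => X ω * Real.sqrt (2 * W ω) * U ω) P
      ∧ ∀ t : ℝ,
        ∫ ω, Real.cos (t * (W ω * U ω)) ∂P
          = ∫ ω, Real.exp (-(t ^ 2 * W ω * (U ω) ^ 2)) ∂P := by
  have hmeas : ∀ i, Measurable (![U, W, X, Z] i) := by
    intro i; fin_cases i <;> assumption
  have hWU : IndepFun W U P := by simpa using hindep.indepFun (i := 1) (j := 0) (by decide)
  have hZ_WU : IndepFun Z (fun ω ↦ W ω * U ω) P := by
    simpa [Function.comp_def] using ((hindep.indepFun_prodMk hmeas 1 0 3 (by decide)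
      (by decide)).comp (measurable_fst.mul measurable_snd) measurable_id).symm
  have hX_SU : IndepFun X (fun ω ↦ √(2 * W ω) * U ω) P := by
    simpa [Function.comp_def] using ((hindep.indepFun_prodMk hmeas 1 0 2 (by decide)
      (by decide)).comp (φ := fun p : ℝ × ℝ ↦ √(2 * p.1) * p.2) (by fun_prop) measurable_id).symm
  have hWlaw : P.map W = expMeasure 1 := map_eq_expMeasure_of_tail_eq one_pos hWm (by simpa)
  have hW0 : ∀ᵐ ω ∂P, 0 ≤ W ω := ae_of_ae_map hWm.aemeasurable (hWlaw ▸ ae_nonneg_expMeasure 1)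
  have hcos_exp := hWU.integral_cos_mul_eq_integral_exp_neg_mul_sq hWm hUm hWlaw
  refine ⟨Measure.ext_of_charFun (funext fun t ↦ ?_), hcos_exp⟩
  simp_rw [mul_assoc]
  rw [hZ_WU.charFun_map_mul_of_map_eq_rademacherMeasure hZm (by fun_prop)
      (map_eq_rademacherMeasure hZm (by simpa using hZ.1) (by simpa using hZ.2)),
    hX_SU.charFun_map_mul_of_map_eq_gaussianReal hXm (by fun_prop) hX, hcos_exp]
  refine congr_arg _ (integral_congr_ae ?_)
  filter_upwards [hW0] with ω hω
  rw [NNReal.coe_one, mul_pow, mul_pow, Real.sq_sqrt (by positivity)]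
  ring_nf

/-- The real part of the characteristic function of any mixed exponential
distribution is the characteristic function of a normal scale mixture. Precisely: if `U`
is a nonnegative random variable, `W` a standard exponential random variable, `X` a
standard normal random variable and `Z` a Rademacher random variable, with `U, W, X, Z`
mutually independent, then `Z·W·U` and `X·√(2W)·U` have the same distribution;
equivalently, `E[cos (t·W·U)] = E[exp (-t²·W·U²)]` for all `t ∈ ℝ`. -/
theorem re_charFun_mixed_exponential_is_normal_scale_mixture
    {Ω : Type*} [MeasurableSpace Ω] (P : Measure Ω) [IsProbabilityMeasure P]
    (U W X Z : Ω → ℝ)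
    (hUm : Measurable U) (hWm : Measurable W) (hXm : Measurable X) (hZm : Measurable Z)
    (hUnn : ∀ᵐ ω ∂P, 0 ≤ U ω)
    (hW : ∀ x : ℝ, 0 ≤ x → P {ω | x < W ω} = ENNReal.ofReal (Real.exp (-x)))
    (hX : Measure.map X P = gaussianReal 0 1)
    (hZ : P {ω | Z ω = 1} = 1 / 2 ∧ P {ω | Z ω = -1} = 1 / 2)
    (hindep : iIndepFun ![U, W, X, Z] P) :
    Measure.map (fun ω => Z ω * W ω * U ω) P
        = Measure.map (fun ω => X ω * Real.sqrt (2 * W ω) * U ω) P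
      ∧ ∀ t : ℝ,
        ∫ ω, Real.cos (t * (W ω * U ω)) ∂P
          = ∫ ω, Real.exp (-(t ^ 2 * W ω * (U ω) ^ 2)) ∂P :=
  re_charFun_mixed_exponential_is_normal_scale_mixture_general P U W X Z hUm hWm hXm hZm hW hX hZ
    hindep
end
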